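/- arXiv:2108.08778 — 4 statements merged into one kernel-verified Lean document; each statement's English description precedes it below -/
import Mathlib

section
/- (Kan–Moshchevitin) For any two irrational numbers α, β with α ± β ∉ ℤ, the difference ψ_α(t) − ψ_β(t) changes sign infinitely often as t → ∞; that is, there exist arbitrarily large t₁ and t₂ with ψ_α(t₁) > ψ_β(t₁) and ψ_α(t₂) < ψ_β(t₂). -/
/-- Complete quotients of the continued fraction of `α`:
`cq α 0 = α`, `cq α (n+1) = 1 / fract (cq α n)`. -/
noncomputable def cq (α : ℝ) : ℕ → ℝ
  | 0 => α
  | n + 1 => 1 / Int.fract (cq α n)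

/-- Partial quotients `a_n` of the continued fraction of `α`. -/
noncomputable def pq (α : ℝ) (n : ℕ) : ℤ := ⌊cq α n⌋

/-- Convergent numerators `p_n`. -/
noncomputable def cnum (α : ℝ) : ℕ → ℤ
  | 0 => pq α 0
  | 1 => pq α 1 * pq α 0 + 1
  | n + 2 => pq α (n + 2) * cnum α (n + 1) + cnum α n

/-- Convergent denominators `q_n`. -/
noncomputable def cden (α : ℝ) : ℕ → ℤ
  | 0 => 1
  | 1 => pq α 1
  | n + 2 => pq α (n + 2) * cden α (n + 1) + cden α n

/-- Approximation errors `ξ_n = |q_n α - p_n|`. -/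
noncomputable def xi (α : ℝ) (n : ℕ) : ℝ := |(cden α n : ℝ) * α - (cnum α n : ℝ)|

/-- Value of the finite continued fraction `[c₁; c₂, ..., c_k]` (empty list gives `0`). -/
noncomputable def cfval : List ℝ → ℝ
  | [] => 0
  | c :: l => c + 1 / cfval l

/-- Reversed quotient `α*_n = [0; a_n, a_{n-1}, ..., a_1]`. -/
noncomputable def revq (α : ℝ) (n : ℕ) : ℝ :=
  1 / cfval ((List.range n).map fun i => (pq α (n - i) : ℝ))

/-- Distance of a real number to the nearest integer. -/
noncomputable def distZ (x : ℝ) : ℝ := |x - round x|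

/-- Irrationality measure function `ψ_α(t) = min_{q ∈ ℤ₊, q ≤ t} ‖qα‖`. -/
noncomputable def psi (α : ℝ) (t : ℝ) : ℝ :=
  sInf {v : ℝ | ∃ q : ℕ, 0 < q ∧ (q : ℝ) ≤ t ∧ v = distZ ((q : ℝ) * α)}

/-- Continuant `⟨c₁, ..., c_k⟩` (empty continuant equals `1`). -/
def contnt : List ℤ → ℤ
  | [] => 1
  | [c] => c
  | c :: c' :: l => c * contnt (c' :: l) + contnt l

/-- The `k`-index: the number of orderings (permutations) of the `ψ`-functions
that occur for arbitrarily large `t`. -/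
noncomputable def kIndex {n : ℕ} (α : Fin n → ℝ) : ℕ :=
  Set.ncard {σ : Equiv.Perm (Fin n) |
    ∀ T : ℝ, ∃ t : ℝ, T < t ∧ ∀ i j : Fin n, i < j →
      psi (α (σ j)) t < psi (α (σ i)) t}

namespace KM

/-! ### Basic facts about `distZ` -/

lemma distZ_nonneg (x : ℝ) : 0 ≤ distZ x := abs_nonneg _

lemma distZ_le_abs_sub_int (x : ℝ) (z : ℤ) : distZ x ≤ |x - z| := by
  rcases eq_or_ne z (round x) with rfl | hne
  · exact le_of_eq rfl
  · have h1 : (1 : ℝ) ≤ |(round x : ℝ) - z| := by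
      have : round x - z ≠ 0 := sub_ne_zero.2 (by exact_mod_cast Ne.symm hne)
      have : (1 : ℤ) ≤ |round x - z| := Int.one_le_abs this
      calc (1:ℝ) ≤ ((|round x - z| : ℤ) : ℝ) := by exact_mod_cast this
        _ = |(round x : ℝ) - z| := by push_cast [Int.cast_abs]; ring_nf
    have h2 : |x - round x| ≤ 1 / 2 := abs_sub_round x
    have h3 : |(round x : ℝ) - z| ≤ |x - round x| + |x - z| := by
      have := abs_sub_abs_le_abs_sub ((round x : ℝ) - z) 0
      calc |(round x : ℝ) - z| = |(x - z) - (x - round x)| := by ring_nf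
        _ ≤ |x - z| + |x - round x| := abs_sub _ _
        _ = |x - round x| + |x - z| := by ring
    unfold distZ
    linarith

lemma distZ_pos {γ : ℝ} (h : Irrational γ) {q : ℕ} (hq : 0 < q) :
    0 < distZ ((q : ℝ) * γ) := by
  have hirr : Irrational ((q : ℝ) * γ) := h.natCast_mul (by omega)
  have : (q : ℝ) * γ - round ((q : ℝ) * γ) ≠ 0 := by
    intro h0
    have : (q : ℝ) * γ = ((round ((q : ℝ) * γ) : ℤ) : ℝ) := by linarith
    exact hirr.ne_int _ this
  exact abs_pos.2 this

/-- For irrational γ and any positive `n`, there is a strictly larger `q` with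
strictly smaller `distZ (q * γ)`. -/
lemma exists_better {γ : ℝ} (h : Irrational γ) {n : ℕ} (hn : 0 < n) :
    ∃ q : ℕ, n < q ∧ distZ ((q : ℝ) * γ) < distZ ((n : ℝ) * γ) := by
  classical
  have hne : (Finset.Icc 1 n).Nonempty := ⟨1, by simp; omega⟩
  set ε := (Finset.Icc 1 n).inf' hne (fun q => distZ ((q : ℝ) * γ)) with hε
  have hεpos : 0 < ε := by
    rw [hε]
    apply (Finset.lt_inf'_iff _).2
    intro q hq
    exact distZ_pos h (by simp at hq; omega)
  obtain ⟨N, hN⟩ := exists_nat_gt (1 / ε)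
  have hN1 : 0 < N := by
    by_contra hc
    push_neg at hc
    interval_cases N
    simp at hN
    have := one_div_pos.2 hεpos
    linarith
  obtain ⟨j, k, hk0, hkN, hjk⟩ := Real.exists_int_int_abs_mul_sub_le γ hN1
  set q : ℕ := k.toNat with hqdef
  have hq0 : 0 < q := by omega
  have hqcast : (q : ℝ) = (k : ℝ) := by
    have : (q : ℤ) = k := Int.toNat_of_nonneg hk0.le
    exact_mod_cast congrArg (fun z : ℤ => (z : ℝ)) this
  have hsmall : distZ ((q : ℝ) * γ) < ε := by
    have h1 : distZ ((q : ℝ) * γ) ≤ |(q : ℝ) * γ - j| := distZ_le_abs_sub_int _ j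
    rw [← hqcast] at hjk
    have h2 : (1 : ℝ) / (N + 1) < ε := by
      rw [div_lt_iff₀ (by positivity)]
      rw [div_lt_iff₀ hεpos] at hN
      nlinarith
    exact lt_of_le_of_lt (h1.trans hjk) h2
  have hlarge : n < q := by
    by_contra hc
    push_neg at hc
    have hqIcc : q ∈ Finset.Icc 1 n := by simp; omega
    have : ε ≤ distZ ((q : ℝ) * γ) := Finset.inf'_le _ hqIcc
    linarith
  refine ⟨q, hlarge, lt_of_lt_of_le hsmall ?_⟩
  rw [hε]
  exact Finset.inf'_le _ (by simp; omega)

/-! ### The sequence of best approximation denominators -/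

open Classical in
/-- The next record denominator after `n`. -/
noncomputable def nxt (γ : ℝ) (n : ℕ) : ℕ :=
  if h : ∃ q : ℕ, n < q ∧ distZ ((q : ℝ) * γ) < distZ ((n : ℝ) * γ) then Nat.find h
  else n + 1

/-- The sequence of best approximation denominators of `γ` (starting with `1`). -/
noncomputable def bA (γ : ℝ) : ℕ → ℕ
  | 0 => 1
  | k + 1 => nxt γ (bA γ k)

variable {γ : ℝ}

lemma nxt_spec (h : Irrational γ) {n : ℕ} (hn : 0 < n) :
    n < nxt γ n ∧ distZ ((nxt γ n : ℝ) * γ) < distZ ((n : ℝ) * γ) ∧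
      ∀ q : ℕ, q < nxt γ n → n < q → ¬ distZ ((q : ℝ) * γ) < distZ ((n : ℝ) * γ) := by
  classical
  have hex := exists_better h hn
  rw [nxt, dif_pos hex]
  refine ⟨(Nat.find_spec hex).1, (Nat.find_spec hex).2, ?_⟩
  intro q hq hq2 hq3
  exact Nat.find_min hex hq ⟨hq2, hq3⟩

lemma bA_pos (h : Irrational γ) (k : ℕ) : 0 < bA γ k := by
  induction k with
  | zero => simp [bA]
  | succ k ih => exact lt_trans ih (nxt_spec h ih).1

lemma bA_lt (h : Irrational γ) (k : ℕ) : bA γ k < bA γ (k + 1) :=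
  (nxt_spec h (bA_pos h k)).1

lemma bA_mono (h : Irrational γ) : StrictMono (bA γ) :=
  strictMono_nat_of_lt_succ (bA_lt h)

lemma bA_zero (γ : ℝ) : bA γ 0 = 1 := rfl

lemma bA_ge (h : Irrational γ) (k : ℕ) : k + 1 ≤ bA γ k := by
  induction k with
  | zero => simp [bA]
  | succ k ih => have := bA_lt h k; omega

/-- The error at step `k`. -/
noncomputable def EE (γ : ℝ) (k : ℕ) : ℝ := distZ ((bA γ k : ℝ) * γ)

lemma EE_pos (h : Irrational γ) (k : ℕ) : 0 < EE γ k :=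
  distZ_pos h (bA_pos h k)

lemma EE_lt (h : Irrational γ) (k : ℕ) : EE γ (k + 1) < EE γ k :=
  (nxt_spec h (bA_pos h k)).2.1

/-- Minimality: any positive `q < bA γ (k+1)` has `distZ (q γ) ≥ EE γ k`. -/
lemma EE_min (h : Irrational γ) : ∀ k : ℕ, ∀ q : ℕ, 0 < q → q < bA γ (k + 1) →
    EE γ k ≤ distZ ((q : ℝ) * γ) := by
  intro k
  induction k with
  | zero =>
    intro q hq hqlt
    rcases Nat.lt_or_ge (bA γ 0) q with hgt | hle
    · exact le_of_not_gt ((nxt_spec h (bA_pos h 0)).2.2 q hqlt hgt)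
    · have hq1 : q = bA γ 0 := by
        have := bA_zero γ; omega
      rw [hq1]
      exact le_of_eq rfl
  | succ k ih =>
    intro q hq hqlt
    rcases Nat.lt_or_ge (bA γ (k + 1)) q with hgt | hle
    · exact le_of_not_gt ((nxt_spec h (bA_pos h (k + 1))).2.2 q hqlt hgt)
    · rcases Nat.lt_or_ge q (bA γ (k + 1)) with hlt | hge
      · exact le_trans (EE_lt h k).le (ih q hq hlt)
      · have hq1 : q = bA γ (k + 1) := by omega
        rw [hq1]
        exact le_of_eq rfl

/-! ### The step formula for `psi` -/

lemma psi_eq (h : Irrational γ) {k : ℕ} {t : ℝ} (h1 : (bA γ k : ℝ) ≤ t)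
    (h2 : t < (bA γ (k + 1) : ℝ)) : psi γ t = EE γ k := by
  have hmem : EE γ k ∈ {v : ℝ | ∃ q : ℕ, 0 < q ∧ (q : ℝ) ≤ t ∧ v = distZ ((q : ℝ) * γ)} :=
    ⟨bA γ k, bA_pos h k, h1, rfl⟩
  apply le_antisymm
  · exact csInf_le ⟨0, by rintro v ⟨q, _, _, rfl⟩; exact distZ_nonneg _⟩ hmem
  · apply le_csInf ⟨_, hmem⟩
    rintro v ⟨q, hq, hqt, rfl⟩
    have : q < bA γ (k + 1) := by exact_mod_cast lt_of_le_of_lt hqt h2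
    exact EE_min h k q hq this

/-- Every `t ≥ 1` lies in some step interval. -/
lemma exists_step (h : Irrational γ) {N : ℕ} (hN : 1 ≤ N) :
    ∃ k : ℕ, bA γ k ≤ N ∧ N < bA γ (k + 1) := by
  classical
  set P : ℕ → Prop := fun k => bA γ k ≤ N with hP
  have h0 : P 0 := by rw [hP]; simpa [bA_zero] using hN
  set K := Nat.findGreatest P N with hK
  have hKspec : P K := Nat.findGreatest_spec (Nat.zero_le N) h0
  refine ⟨K, hKspec, ?_⟩
  rcases Nat.lt_or_ge N (K + 1) with hc | hc
  · have : N ≤ K := by omega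
    have := bA_ge h (K + 1)
    omega
  · by_contra hcon
    push_neg at hcon
    have : K + 1 ≤ K := Nat.le_findGreatest hc hcon
    omega

/-! ### Signed errors, alternation, the key identity -/

/-- Nearest integer to `bA γ k * γ`. -/
noncomputable def PP (γ : ℝ) (k : ℕ) : ℤ := round ((bA γ k : ℝ) * γ)

/-- Signed error. -/
noncomputable def th (γ : ℝ) (k : ℕ) : ℝ := (bA γ k : ℝ) * γ - (PP γ k : ℝ)

lemma abs_th (k : ℕ) : |th γ k| = EE γ k := rfl

lemma th_ne (h : Irrational γ) (k : ℕ) : th γ k ≠ 0 := by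
  intro h0
  have := EE_pos h k
  rw [← abs_th, h0] at this
  simp at this

/-- Helper: if `a * b ≤ 0` then `|a - b| = |a| + |b|`. -/
lemma abs_sub_of_mul_nonpos {a b : ℝ} (hab : a * b ≤ 0) : |a - b| = |a| + |b| := by
  have h1 : |a - b| ≤ |a| + |b| := abs_sub a b
  have h2 : |a| * |b| = -(a * b) := by rw [← abs_mul]; exact abs_of_nonpos hab
  have h3 : |a - b| ^ 2 = (|a| + |b|) ^ 2 := by
    have ha := sq_abs a
    have hb := sq_abs b
    have hc := sq_abs (a - b)
    nlinarith
  have h4 : 0 ≤ |a - b| := abs_nonneg _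
  have h5 : 0 ≤ |a| + |b| := by positivity
  nlinarith

/-- Helper: if `a * b ≥ 0`, `b ≠ 0`, `|b| < |a|` then `|b - a| < |a|`. -/
lemma abs_sub_lt_of_mul_nonneg {a b : ℝ} (hab : 0 ≤ a * b) (hb : b ≠ 0)
    (hba : |b| < |a|) : |b - a| < |a| := by
  have h2 : |a| * |b| = a * b := by rw [← abs_mul]; exact abs_of_nonneg hab
  have hb2 : 0 < b ^ 2 := by positivity
  have ha := sq_abs a
  have hbq := sq_abs b
  have hc := sq_abs (b - a)
  have h4 : 0 ≤ |b - a| := abs_nonneg _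
  have h5 : 0 ≤ |a| := abs_nonneg _
  have hbn : 0 ≤ |b| := abs_nonneg _
  -- (b-a)^2 = a^2 + b^2 - 2|a||b| ≤ a^2 - b^2 < a^2
  nlinarith

lemma th_cast_sub (h : Irrational γ) {j k : ℕ} (hjk : j < k) :
    ((bA γ k - bA γ j : ℕ) : ℝ) * γ - ((PP γ k - PP γ j : ℤ) : ℝ) = th γ k - th γ j := by
  have hle : bA γ j ≤ bA γ k := (bA_mono h).le_iff_le.2 hjk.le
  push_cast [Nat.cast_sub hle]
  unfold th
  ring

/-- Consecutive signed errors have opposite signs. -/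
lemma th_alt (h : Irrational γ) (k : ℕ) : th γ k * th γ (k + 1) < 0 := by
  rcases lt_or_ge (th γ k * th γ (k + 1)) 0 with hlt | hge
  · exact hlt
  · exfalso
    set q : ℕ := bA γ (k + 1) - bA γ k with hq
    have hlt := bA_lt h k
    have hq0 : 0 < q := by omega
    have hqlt : q < bA γ (k + 1) := by
      have := bA_pos h k; omega
    have h1 : EE γ k ≤ distZ ((q : ℝ) * γ) := EE_min h k q hq0 hqlt
    have h2 : distZ ((q : ℝ) * γ) ≤ |(q : ℝ) * γ - ((PP γ (k+1) - PP γ k : ℤ) : ℝ)| :=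
      distZ_le_abs_sub_int _ _
    rw [hq, th_cast_sub h (Nat.lt_succ_self k)] at h2
    have h3 : |th γ (k + 1) - th γ k| < |th γ k| := by
      apply abs_sub_lt_of_mul_nonneg (mul_comm (th γ k) (th γ (k+1)) ▸ hge)
        (th_ne h (k + 1))
      rw [abs_th, abs_th]
      exact EE_lt h k
    rw [abs_th] at h3
    linarith

/-- `EE γ k ≤ 1 / bA γ (k+1)` (Dirichlet). -/
lemma EE_le_inv (h : Irrational γ) (k : ℕ) : EE γ k ≤ 1 / (bA γ (k + 1) : ℝ) := by
  have h2 : 2 ≤ bA γ (k + 1) := by have := bA_ge h (k + 1); omega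
  set n : ℕ := bA γ (k + 1) - 1 with hn
  have hn1 : 0 < n := by omega
  obtain ⟨j, kk, hk0, hkn, hjk⟩ := Real.exists_int_int_abs_mul_sub_le γ hn1
  set q : ℕ := kk.toNat with hqd
  have hq0 : 0 < q := by omega
  have hqn : q ≤ n := by omega
  have hqcast : (q : ℝ) = (kk : ℝ) := by
    have : (q : ℤ) = kk := Int.toNat_of_nonneg hk0.le
    exact_mod_cast congrArg (fun z : ℤ => (z : ℝ)) this
  have h1 : EE γ k ≤ distZ ((q : ℝ) * γ) := EE_min h k q hq0 (by omega)
  have h3 : distZ ((q : ℝ) * γ) ≤ |(q : ℝ) * γ - j| := distZ_le_abs_sub_int _ _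
  rw [← hqcast] at hjk
  have h4 : ((n : ℝ) + 1) = (bA γ (k + 1) : ℝ) := by
    rw [hn]; push_cast [Nat.cast_sub (by omega : 1 ≤ bA γ (k+1))]; ring
  calc EE γ k ≤ 1 / ((n : ℝ) + 1) := le_trans h1 (h3.trans hjk)
    _ = 1 / (bA γ (k + 1) : ℝ) := by rw [h4]

/-- The key identity and the determinant `±1`. -/
lemma identity (h : Irrational γ) (k : ℕ) :
    (bA γ (k + 1) : ℝ) * EE γ k + (bA γ k : ℝ) * EE γ (k + 1) = 1 ∧
      ((bA γ k : ℤ) * PP γ (k + 1) - (bA γ (k + 1) : ℤ) * PP γ k = 1 ∨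
       (bA γ k : ℤ) * PP γ (k + 1) - (bA γ (k + 1) : ℤ) * PP γ k = -1) := by
  set D : ℤ := (bA γ k : ℤ) * PP γ (k + 1) - (bA γ (k + 1) : ℤ) * PP γ k with hD
  have hcast : (D : ℝ) = (bA γ (k + 1) : ℝ) * th γ k - (bA γ k : ℝ) * th γ (k + 1) := by
    rw [hD]
    unfold th
    push_cast
    ring
  have hsign : ((bA γ (k + 1) : ℝ) * th γ k) * ((bA γ k : ℝ) * th γ (k + 1)) ≤ 0 := by
    have h1 : th γ k * th γ (k + 1) < 0 := th_alt h k
    have h2 : (0 : ℝ) < (bA γ k : ℝ) := by exact_mod_cast bA_pos h k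
    have h3 : (0 : ℝ) < (bA γ (k + 1) : ℝ) := by exact_mod_cast bA_pos h (k + 1)
    have heq : ((bA γ (k + 1) : ℝ) * th γ k) * ((bA γ k : ℝ) * th γ (k + 1))
        = ((bA γ k : ℝ) * (bA γ (k + 1) : ℝ)) * (th γ k * th γ (k + 1)) := by ring
    rw [heq]
    exact (mul_neg_of_pos_of_neg (mul_pos h2 h3) h1).le
  have habs : |(D : ℝ)| = (bA γ (k + 1) : ℝ) * EE γ k + (bA γ k : ℝ) * EE γ (k + 1) := by
    rw [hcast, abs_sub_of_mul_nonpos hsign, abs_mul, abs_mul, abs_th, abs_th]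
    rw [mul_comm]
    have h2 : (0 : ℝ) ≤ (bA γ k : ℝ) := by positivity
    have h3 : (0 : ℝ) ≤ (bA γ (k + 1) : ℝ) := by positivity
    rw [abs_of_nonneg h2, abs_of_nonneg h3]
    ring
  have hpos : 0 < |(D : ℝ)| := by
    rw [habs]
    have := EE_pos h k
    have := EE_pos h (k + 1)
    have h2 : (0 : ℝ) < (bA γ k : ℝ) := by exact_mod_cast bA_pos h k
    have h3 : (0 : ℝ) < (bA γ (k + 1) : ℝ) := by exact_mod_cast bA_pos h (k + 1)
    positivity
  have hlt2 : |(D : ℝ)| < 2 := by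
    rw [habs]
    have hE := EE_le_inv h k
    have hbpos : (0 : ℝ) < (bA γ (k + 1) : ℝ) := by exact_mod_cast bA_pos h (k + 1)
    have h1 : (bA γ (k + 1) : ℝ) * EE γ k ≤ 1 := by
      rw [le_div_iff₀ hbpos] at hE
      linarith
    have h2 : (bA γ k : ℝ) * EE γ (k + 1) < 1 := by
      have hE1 : EE γ (k + 1) < EE γ k := EE_lt h k
      have hble : (bA γ k : ℝ) ≤ (bA γ (k + 1) : ℝ) := by
        exact_mod_cast (bA_lt h k).le
      have hbpos0 : (0 : ℝ) < (bA γ k : ℝ) := by exact_mod_cast bA_pos h k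
      have : (bA γ k : ℝ) * EE γ (k + 1) < (bA γ (k + 1) : ℝ) * EE γ k := by
        apply mul_lt_mul' hble hE1 (le_of_lt (EE_pos h (k+1))) hbpos
      linarith
    linarith
  have hD1 : D = 1 ∨ D = -1 := by
    have h1 : D ≠ 0 := by
      intro h0
      rw [h0] at hpos
      simp at hpos
    have h2 : |D| < 2 := by
      have he : ((|D| : ℤ) : ℝ) = |(D : ℝ)| := by push_cast [Int.cast_abs]; rfl
      have h3 : ((|D| : ℤ) : ℝ) < 2 := by rw [he]; exact hlt2
      exact_mod_cast h3
    rcases abs_lt.mp h2 with ⟨hl, hr⟩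
    omega
  constructor
  · have : |(D : ℝ)| = 1 := by
      rcases hD1 with h1 | h1 <;> rw [h1] <;> norm_num
    rw [← this, habs]
  · exact hD1

lemma key_identity (h : Irrational γ) (k : ℕ) :
    (bA γ (k + 1) : ℝ) * EE γ k + (bA γ k : ℝ) * EE γ (k + 1) = 1 :=
  (identity h k).1

/-- Lower bound `EE γ k > 1 / (bA γ k + bA γ (k+1))`. -/
lemma EE_gt (h : Irrational γ) (k : ℕ) :
    1 < ((bA γ k : ℝ) + (bA γ (k + 1) : ℝ)) * EE γ k := by
  have hid := key_identity h k
  have h1 : EE γ (k + 1) < EE γ k := EE_lt h k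
  have h2 : (0 : ℝ) < (bA γ k : ℝ) := by exact_mod_cast bA_pos h k
  nlinarith

/-- Fibonacci-type growth: `bA γ (k+2) ≥ bA γ (k+1) + bA γ k`. -/
lemma bA_fib (h : Irrational γ) (k : ℕ) : bA γ (k + 1) + bA γ k ≤ bA γ (k + 2) := by
  induction k with
  | zero =>
    show bA γ 1 + bA γ 0 ≤ bA γ 2
    have h1 : bA γ 1 < bA γ 2 := bA_lt h 1
    have h0 : bA γ 0 = 1 := rfl
    omega
  | succ k ih =>
    show bA γ (k + 2) + bA γ (k + 1) ≤ bA γ (k + 3)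
    by_contra hcon
    push_neg at hcon
    -- q := bA γ (k+3) - bA γ (k+2) ∈ [1, bA γ (k+1))
    set q : ℕ := bA γ (k + 3) - bA γ (k + 2) with hq
    have hlt : bA γ (k + 2) < bA γ (k + 3) := bA_lt h (k + 2)
    have hq0 : 0 < q := by omega
    have hqlt : q < bA γ (k + 1) := by omega
    have h1 : EE γ k ≤ distZ ((q : ℝ) * γ) := EE_min h k q hq0 hqlt
    have h2 : distZ ((q : ℝ) * γ) ≤ |th γ (k + 3) - th γ (k + 2)| := by
      have := distZ_le_abs_sub_int ((q : ℝ) * γ) (PP γ (k + 3) - PP γ (k + 2))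
      rw [hq, th_cast_sub h (by omega : k + 2 < k + 3)] at this
      exact this
    have h3 : |th γ (k + 3) - th γ (k + 2)| = EE γ (k + 3) + EE γ (k + 2) := by
      have halt : th γ (k + 3) * th γ (k + 2) ≤ 0 := by
        have := th_alt h (k + 2)
        nlinarith
      rw [abs_sub_of_mul_nonpos halt, abs_th, abs_th]
    -- now show EE γ (k+3) + EE γ (k+2) < EE γ k
    have hidk : (bA γ (k + 1) : ℝ) * EE γ k + (bA γ k : ℝ) * EE γ (k + 1) = 1 :=
      key_identity h k
    have hidk1 : (bA γ (k + 2) : ℝ) * EE γ (k + 1) + (bA γ (k + 1) : ℝ) * EE γ (k + 2) = 1 :=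
      key_identity h (k + 1)
    have hlow : 1 < ((bA γ (k + 1) : ℝ) + (bA γ (k + 2) : ℝ)) * EE γ (k + 1) := EE_gt h (k + 1)
    have hfib : (bA γ (k + 1) : ℝ) + (bA γ k : ℝ) ≤ (bA γ (k + 2) : ℝ) := by
      exact_mod_cast ih
    have hE32 : EE γ (k + 3) < EE γ (k + 2) := EE_lt h (k + 2)
    have hE21 : EE γ (k + 2) < EE γ (k + 1) := EE_lt h (k + 1)
    have hb1 : (0 : ℝ) < (bA γ (k + 1) : ℝ) := by exact_mod_cast bA_pos h (k + 1)
    have hb2 : (0 : ℝ) < (bA γ (k + 2) : ℝ) := by exact_mod_cast bA_pos h (k + 2)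
    have hb0 : (0 : ℝ) < (bA γ k : ℝ) := by exact_mod_cast bA_pos h k
    have hEpos : 0 < EE γ (k + 1) := EE_pos h (k + 1)
    -- bA(k+1) * (EE k - 2 EE (k+2)) = (2 bA(k+2) - bA k) * EE(k+1) - 1 > 0
    have hkey : EE γ (k + 3) + EE γ (k + 2) < EE γ k := by
      nlinarith
    linarith

/-! ### The main rigidity lemma -/

lemma irrational_int_combination {x : ℝ} (hx : Irrational x) {k : ℤ} (hk : k ≠ 0) (z : ℤ) :
    (k : ℝ) * x ≠ (z : ℝ) :=
  (hx.intCast_mul hk).ne_int z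

set_option maxHeartbeats 2000000 in
/-- If `ψ_α ≤ ψ_β` from some point on, then `α - β ∈ ℤ` or `α + β ∈ ℤ`. -/
lemma main_lemma (α β : ℝ) (hα : Irrational α) (hβ : Irrational β) (T : ℝ)
    (hcomp : ∀ t : ℝ, T ≤ t → psi α t ≤ psi β t) :
    (∃ z : ℤ, α - β = (z : ℝ)) ∨ (∃ z : ℤ, α + β = (z : ℝ)) := by
  classical
  set M : ℕ := ⌈T⌉₊ with hM
  -- the index function: bA α (nn m) ≤ bA β m < bA α (nn m + 1)
  choose nn hn1 hn2 using fun m : ℕ => exists_step hα (bA_pos hβ m)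
  -- find m ≥ M where the β-interval catches up: bA α (nn m + 1) ≤ bA β (m+1)
  have hfind : ∃ m : ℕ, M ≤ m ∧ bA α (nn m + 1) ≤ bA β (m + 1) := by
    by_contra hno
    push_neg at hno
    have hbound : ∀ j : ℕ, bA β (M + j) < bA α (nn M + 1) := by
      intro j
      induction j with
      | zero => simpa using hn2 M
      | succ j ih =>
        have hle : nn (M + j) + 1 ≤ nn M + 1 := by
          have h1 : bA α (nn (M + j)) < bA α (nn M + 1) := lt_of_le_of_lt (hn1 (M + j)) ih
          have := (bA_mono hα).lt_iff_lt.mp h1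
          omega
        have h2 : bA β (M + j + 1) < bA α (nn (M + j) + 1) := hno (M + j) (by omega)
        have h3 : bA α (nn (M + j) + 1) ≤ bA α (nn M + 1) :=
          (bA_mono hα).le_iff_le.mpr hle
        have h4 : M + (j + 1) = M + j + 1 := by omega
        rw [h4]
        omega
    have h5 := hbound (bA α (nn M + 1))
    have h6 := bA_ge hβ (M + bA α (nn M + 1))
    omega
  obtain ⟨m, hmM, hQR⟩ := hfind
  set n := nn m with hn
  have hQn : bA α n ≤ bA β m := hn1 m
  have hQn1 : bA β m < bA α (n + 1) := hn2 m
  -- T ≤ bA β m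
  have hTm : T ≤ (bA β m : ℝ) := by
    have h1 : T ≤ (M : ℝ) := Nat.le_ceil T
    have h2 : (M : ℝ) ≤ (bA β M : ℝ) := by
      have := bA_ge hβ M; exact_mod_cast Nat.le_of_lt (by omega)
    have h3 : (bA β M : ℝ) ≤ (bA β m : ℝ) := by
      exact_mod_cast (bA_mono hβ).le_iff_le.mpr hmM
    linarith
  -- E n ≤ H m
  have hEH : EE α n ≤ EE β m := by
    have h1 := hcomp (bA β m : ℝ) hTm
    rw [psi_eq hα (by exact_mod_cast hQn) (by exact_mod_cast hQn1)] at h1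
    rw [psi_eq hβ le_rfl (by exact_mod_cast bA_lt hβ m)] at h1
    exact h1
  have idα := key_identity hα n
  have idβ := key_identity hβ m
  -- cast shorthands
  have hb0 : (0 : ℝ) < (bA α n : ℝ) := by exact_mod_cast bA_pos hα n
  have hb1 : (0 : ℝ) < (bA α (n + 1) : ℝ) := by exact_mod_cast bA_pos hα (n + 1)
  have hr0 : (0 : ℝ) < (bA β m : ℝ) := by exact_mod_cast bA_pos hβ m
  have hr1 : (0 : ℝ) < (bA β (m + 1) : ℝ) := by exact_mod_cast bA_pos hβ (m + 1)
  have hEn : 0 < EE α n := EE_pos hα n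
  have hEn1 : 0 < EE α (n + 1) := EE_pos hα (n + 1)
  have hHm : 0 < EE β m := EE_pos hβ m
  have hHm1 : 0 < EE β (m + 1) := EE_pos hβ (m + 1)
  rcases le_or_gt (bA α (n + 2)) (bA β (m + 1)) with hskip | hnoskip
  · -- skip case is impossible
    exfalso
    have hE1H : EE α (n + 1) ≤ EE β m := by
      have hT' : T ≤ (bA α (n + 1) : ℝ) := by
        have : (bA β m : ℝ) ≤ (bA α (n + 1) : ℝ) := by exact_mod_cast hQn1.le
        linarith
      have h1 := hcomp (bA α (n + 1) : ℝ) hT'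
      rw [psi_eq hα le_rfl (by exact_mod_cast bA_lt hα (n + 1))] at h1
      rw [psi_eq hβ (by exact_mod_cast hQn1.le)
        (by exact_mod_cast lt_of_lt_of_le (bA_lt hα (n + 1)) hskip)] at h1
      exact h1
    have hfib : bA α (n + 1) + bA α n ≤ bA α (n + 2) := bA_fib hα n
    have hc1 : ((bA α n : ℝ) + (bA α (n + 1) : ℝ)) ≤ (bA β (m + 1) : ℝ) := by
      have : bA α n + bA α (n + 1) ≤ bA β (m + 1) := by omega
      exact_mod_cast this
    have h6 : ((bA α n : ℝ) + (bA α (n + 1) : ℝ)) * EE β m ≤ (bA β (m + 1) : ℝ) * EE β m :=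
      mul_le_mul_of_nonneg_right hc1 hHm.le
    have h7 : (bA α n : ℝ) * EE α (n + 1) ≤ (bA α n : ℝ) * EE β m :=
      mul_le_mul_of_nonneg_left hE1H hb0.le
    have h8 : (bA α (n + 1) : ℝ) * EE α n ≤ (bA α (n + 1) : ℝ) * EE β m :=
      mul_le_mul_of_nonneg_left hEH hb1.le
    have h9 : 0 < (bA β m : ℝ) * EE β (m + 1) := mul_pos hr0 hHm1
    nlinarith
  · -- rigidity case
    have hE1H1 : EE α (n + 1) ≤ EE β (m + 1) := by
      have hT' : T ≤ (bA β (m + 1) : ℝ) := by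
        have : (bA β m : ℝ) ≤ (bA β (m + 1) : ℝ) := by exact_mod_cast (bA_lt hβ m).le
        linarith
      have h1 := hcomp (bA β (m + 1) : ℝ) hT'
      rw [psi_eq hα (by exact_mod_cast hQR) (by exact_mod_cast hnoskip)] at h1
      rw [psi_eq hβ le_rfl (by exact_mod_cast bA_lt hβ (m + 1))] at h1
      exact h1
    -- the four nonnegative slack terms sum to zero
    have hbr : (bA α n : ℝ) ≤ (bA β m : ℝ) := by exact_mod_cast hQn
    have hbr1 : (bA α (n + 1) : ℝ) ≤ (bA β (m + 1) : ℝ) := by exact_mod_cast hQR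
    have c1 : 0 ≤ ((bA β (m + 1) : ℝ) - (bA α (n + 1) : ℝ)) * EE α n :=
      mul_nonneg (by linarith) hEn.le
    have c2 : 0 ≤ ((bA β m : ℝ) - (bA α n : ℝ)) * EE α (n + 1) :=
      mul_nonneg (by linarith) hEn1.le
    have c3 : 0 ≤ (bA β (m + 1) : ℝ) * (EE β m - EE α n) :=
      mul_nonneg hr1.le (by linarith)
    have c4 : 0 ≤ (bA β m : ℝ) * (EE β (m + 1) - EE α (n + 1)) :=
      mul_nonneg hr0.le (by linarith)
    have csum : ((bA β (m + 1) : ℝ) - (bA α (n + 1) : ℝ)) * EE α n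
        + ((bA β m : ℝ) - (bA α n : ℝ)) * EE α (n + 1)
        + (bA β (m + 1) : ℝ) * (EE β m - EE α n)
        + (bA β m : ℝ) * (EE β (m + 1) - EE α (n + 1)) = 0 := by
      nlinarith [idα, idβ]
    have e1 : ((bA β (m + 1) : ℝ) - (bA α (n + 1) : ℝ)) * EE α n = 0 := by linarith
    have e2 : ((bA β m : ℝ) - (bA α n : ℝ)) * EE α (n + 1) = 0 := by linarith
    have e3 : (bA β (m + 1) : ℝ) * (EE β m - EE α n) = 0 := by linarith
    have e4 : (bA β m : ℝ) * (EE β (m + 1) - EE α (n + 1)) = 0 := by linarith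
    -- conclude the equalities
    have hrmqn : bA β m = bA α n := by
      have : (bA β m : ℝ) = (bA α n : ℝ) := by
        rcases mul_eq_zero.mp e2 with h | h
        · linarith
        · linarith
      exact_mod_cast this
    have hrmqn1 : bA β (m + 1) = bA α (n + 1) := by
      have : (bA β (m + 1) : ℝ) = (bA α (n + 1) : ℝ) := by
        rcases mul_eq_zero.mp e1 with h | h
        · linarith
        · linarith
      exact_mod_cast this
    have hHmEn : EE β m = EE α n := by
      rcases mul_eq_zero.mp e3 with h | h
      · linarith
      · linarith
    have hHm1En1 : EE β (m + 1) = EE α (n + 1) := by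
      rcases mul_eq_zero.mp e4 with h | h
      · linarith
      · linarith
    -- the two absolute-value equalities
    have habs0 : |(bA α n : ℝ) * α - (PP α n : ℝ)| = |(bA α n : ℝ) * β - (round ((bA α n : ℝ) * β) : ℝ)| := by
      have h1 : EE α n = distZ ((bA α n : ℝ) * β) := by
        rw [← hHmEn]
        unfold EE
        rw [hrmqn]
      unfold EE distZ at h1
      exact h1
    have habs1 : |(bA α (n + 1) : ℝ) * α - (PP α (n + 1) : ℝ)|
        = |(bA α (n + 1) : ℝ) * β - (round ((bA α (n + 1) : ℝ) * β) : ℝ)| := by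
      have h1 : EE α (n + 1) = distZ ((bA α (n + 1) : ℝ) * β) := by
        rw [← hHm1En1]
        unfold EE
        rw [hrmqn1]
      unfold EE distZ at h1
      exact h1
    set A : ℤ := PP α n with hA
    set A' : ℤ := PP α (n + 1) with hA'
    set B : ℤ := round ((bA α n : ℝ) * β) with hB
    set B' : ℤ := round ((bA α (n + 1) : ℝ) * β) with hB'
    have hD := (identity hα n).2
    set D : ℤ := (bA α n : ℤ) * PP α (n + 1) - (bA α (n + 1) : ℤ) * PP α n with hDdef
    have hD2 : (D : ℝ) * (D : ℝ) = 1 := by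
      rcases hD with h | h <;> rw [h] <;> norm_num
    have hDcast : (D : ℝ) = (bA α n : ℝ) * (A' : ℝ) - (bA α (n + 1) : ℝ) * (A : ℝ) := by
      rw [hDdef]; push_cast; ring
    rcases abs_eq_abs.mp habs0 with hs0 | hs0 <;> rcases abs_eq_abs.mp habs1 with hs1 | hs1
    · -- same sign at both: α - β ∈ ℤ
      left
      have f1 : (bA α n : ℝ) * (α - β) = ((A - B : ℤ) : ℝ) := by push_cast; linarith
      have f2 : (bA α (n + 1) : ℝ) * (α - β) = ((A' - B' : ℤ) : ℝ) := by push_cast; linarith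
      refine ⟨D * ((A' * (A - B)) - (A * (A' - B'))), ?_⟩
      have hW : (D : ℝ) * (α - β) = ((A' * (A - B) - A * (A' - B') : ℤ) : ℝ) := by
        push_cast at f1 f2 ⊢
        rw [hDcast]
        linear_combination (A' : ℝ) * f1 - (A : ℝ) * f2
      calc α - β = ((D : ℝ) * (D : ℝ)) * (α - β) := by rw [hD2]; ring
        _ = (D : ℝ) * ((D : ℝ) * (α - β)) := by ring
        _ = (D : ℝ) * ((A' * (A - B) - A * (A' - B') : ℤ) : ℝ) := by rw [hW]
        _ = ((D * (A' * (A - B) - A * (A' - B')) : ℤ) : ℝ) := by push_cast; ring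
    · -- mixed: contradiction with irrationality of α
      exfalso
      have f1 : (bA α n : ℝ) * (α - β) = ((A - B : ℤ) : ℝ) := by push_cast; linarith
      have f2 : (bA α (n + 1) : ℝ) * (α + β) = ((A' + B' : ℤ) : ℝ) := by push_cast; linarith
      have hco : ((bA α n : ℤ) * (bA α (n + 1) : ℤ) * 2 : ℤ) ≠ 0 := by
        have := bA_pos hα n; have := bA_pos hα (n + 1)
        positivity
      apply irrational_int_combination hα hco
        ((bA α (n + 1) : ℤ) * (A - B) + (bA α n : ℤ) * (A' + B'))
      push_cast at f1 f2 ⊢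
      linear_combination ((bA α (n + 1) : ℝ)) * f1 + ((bA α n : ℝ)) * f2
    · -- mixed: contradiction with irrationality of α
      exfalso
      have f1 : (bA α n : ℝ) * (α + β) = ((A + B : ℤ) : ℝ) := by push_cast; linarith
      have f2 : (bA α (n + 1) : ℝ) * (α - β) = ((A' - B' : ℤ) : ℝ) := by push_cast; linarith
      have hco : ((bA α n : ℤ) * (bA α (n + 1) : ℤ) * 2 : ℤ) ≠ 0 := by
        have := bA_pos hα n; have := bA_pos hα (n + 1)
        positivity
      apply irrational_int_combination hα hco
        ((bA α (n + 1) : ℤ) * (A + B) + (bA α n : ℤ) * (A' - B'))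
      push_cast at f1 f2 ⊢
      linear_combination ((bA α (n + 1) : ℝ)) * f1 + ((bA α n : ℝ)) * f2
    · -- opposite sign at both: α + β ∈ ℤ
      right
      have f1 : (bA α n : ℝ) * (α + β) = ((A + B : ℤ) : ℝ) := by push_cast; linarith
      have f2 : (bA α (n + 1) : ℝ) * (α + β) = ((A' + B' : ℤ) : ℝ) := by push_cast; linarith
      refine ⟨D * ((A' * (A + B)) - (A * (A' + B'))), ?_⟩
      have hW : (D : ℝ) * (α + β) = ((A' * (A + B) - A * (A' + B') : ℤ) : ℝ) := by
        push_cast at f1 f2 ⊢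
        rw [hDcast]
        linear_combination (A' : ℝ) * f1 - (A : ℝ) * f2
      calc α + β = ((D : ℝ) * (D : ℝ)) * (α + β) := by rw [hD2]; ring
        _ = (D : ℝ) * ((D : ℝ) * (α + β)) := by ring
        _ = (D : ℝ) * ((A' * (A + B) - A * (A' + B') : ℤ) : ℝ) := by rw [hW]
        _ = ((D * (A' * (A + B) - A * (A' + B')) : ℤ) : ℝ) := by push_cast; ring

end KM

theorem stmt6 (α β : ℝ) (hα : Irrational α) (hβ : Irrational β)
    (hsum : ∀ z : ℤ, α + β ≠ (z : ℝ)) (hdiff : ∀ z : ℤ, α - β ≠ (z : ℝ)) :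
    ∀ T : ℝ, (∃ t : ℝ, T < t ∧ psi β t < psi α t) ∧
      (∃ t : ℝ, T < t ∧ psi α t < psi β t) := by
  intro T
  constructor
  · by_contra hc
    push_neg at hc
    have hcomp : ∀ t : ℝ, T + 1 ≤ t → psi α t ≤ psi β t := by
      intro t ht
      exact hc t (by linarith)
    rcases KM.main_lemma α β hα hβ (T + 1) hcomp with ⟨z, hz⟩ | ⟨z, hz⟩
    · exact hdiff z hz
    · exact hsum z hz
  · by_contra hc
    push_neg at hc
    have hcomp : ∀ t : ℝ, T + 1 ≤ t → psi β t ≤ psi α t := by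
      intro t ht
      exact hc t (by linarith)
    rcases KM.main_lemma β α hβ hα (T + 1) hcomp with ⟨z, hz⟩ | ⟨z, hz⟩
    · exact hdiff (-z) (by push_cast; linarith)
    · exact hsum z (by push_cast; linarith)
end

section
/- Main Lemma: Let α, β be irrational with convergent denominators (q_ν), (r_μ) and errors ξ_ν = |q_ν α − p_ν|, η_μ = |r_μ β − s_μ|. Suppose for some indices ν, μ and integer d ≥ 1 that ξ_ν ≤ η_μ, ξ_{ν+1} ≤ η_{μ+d−1}, q_{ν+1} ≤ r_{μ+1}, and q_{ν+2} = r_{μ+d}. Then all three inequalities are equalities, d = 2, and the reversed quotients satisfy α*_{ν+2} = β*_{μ+2} (i.e. q_{ν+1} = r_{μ+1} and q_{ν+2} = r_{μ+2}). -/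
section Recurrence

variable {R : Type*} [Semiring R] [PartialOrder R] [IsOrderedRing R] {a x : ℕ → R}

theorem recurrence_nonneg (ha : ∀ k, 0 ≤ a k) (hx : ∀ k, x (k + 2) = a k * x (k + 1) + x k)
    (h0 : 0 ≤ x 0) (h1 : 0 ≤ x 1) (k : ℕ) : 0 ≤ x k := by
  induction k using Nat.twoStepInduction with
  | zero => exact h0
  | one => exact h1
  | more k ih₀ ih₁ => rw [hx]; exact add_nonneg (mul_nonneg (ha k) ih₁) ih₀

theorem recurrence_succ_le (ha : ∀ k, 1 ≤ a k) (hx : ∀ k, x (k + 2) = a k * x (k + 1) + x k)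
    (h0 : 0 ≤ x 0) (h1 : 0 ≤ x 1) (k : ℕ) : x (k + 1) ≤ x (k + 2) := by
  have hnn := recurrence_nonneg (fun k => zero_le_one.trans (ha k)) hx h0 h1
  rw [hx]
  exact le_add_of_le_of_nonneg (le_mul_of_one_le_left (hnn _) (ha k)) (hnn k)

theorem recurrence_zero_le (ha : ∀ k, 1 ≤ a k) (hx : ∀ k, x (k + 2) = a k * x (k + 1) + x k)
    (h0 : 0 ≤ x 0) (h1 : 0 ≤ x 1) (k : ℕ) : x 0 ≤ x (k + 2) :=
  calc x 0 ≤ x 2 := by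
        rw [hx]
        exact le_add_of_nonneg_left (mul_nonneg (zero_le_one.trans (ha 0)) h1)
    _ ≤ x (k + 2) := monotone_nat_of_le_succ (f := fun n => x (n + 1))
        (recurrence_succ_le ha hx h0 h1) (by omega : 1 ≤ k + 1)

end Recurrence

section ContinuedFraction

variable {α : ℝ}

theorem irrational_cq (hα : Irrational α) : ∀ n, Irrational (cq α n)
  | 0 => hα
  | n + 1 => by
    rw [cq, one_div, Int.fract]
    exact ((irrational_cq hα n).sub_intCast _).inv

theorem fract_cq_pos (hα : Irrational α) (n : ℕ) : 0 < Int.fract (cq α n) :=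
  Int.fract_pos.2 ((irrational_cq hα n).ne_int _)

theorem one_le_pq (hα : Irrational α) (n : ℕ) : 1 ≤ pq α (n + 1) := by
  rw [pq, cq, Int.le_floor, Int.cast_one, le_div_iff₀ (fract_cq_pos hα n), one_mul]
  exact (Int.fract_lt_one _).le

theorem cden_le_cden_succ (hα : Irrational α) : ∀ n, cden α n ≤ cden α (n + 1)
  | 0 => one_le_pq hα 0
  | n + 1 => recurrence_succ_le (x := cden α) (fun k => one_le_pq hα (k + 1)) (fun _ => rfl)
      zero_le_one (zero_le_one.trans (one_le_pq hα 0)) n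

theorem one_le_cden (hα : Irrational α) (n : ℕ) : 1 ≤ cden α n :=
  monotone_nat_of_le_succ (cden_le_cden_succ hα) n.zero_le

theorem cden_pos (hα : Irrational α) (n : ℕ) : 0 < (cden α n : ℝ) :=
  Int.cast_pos.2 (one_le_cden hα n)

theorem cast_cden_add_two (α : ℝ) (n : ℕ) :
    (cden α (n + 2) : ℝ) = pq α (n + 2) * cden α (n + 1) + cden α n := by
  simp only [cden]
  push_cast
  ring

theorem pq_zero (α : ℝ) : pq α 0 = ⌊α⌋ := rfl

noncomputable def signedErr (α : ℝ) (n : ℕ) : ℝ := cden α n * α - cnum α n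

theorem signedErr_add_two (α : ℝ) (n : ℕ) :
    signedErr α (n + 2) = pq α (n + 2) * signedErr α (n + 1) + signedErr α n := by
  simp only [signedErr, cden, cnum]
  push_cast
  ring

theorem signedErr_zero (α : ℝ) : signedErr α 0 = Int.fract α := by
  simp only [signedErr, cden, cnum, pq_zero]
  push_cast
  rw [one_mul, Int.self_sub_floor]

theorem signedErr_one (α : ℝ) : signedErr α 1 = pq α 1 * Int.fract α - 1 := by
  simp only [signedErr, cden, cnum, pq_zero]
  rw [← Int.self_sub_floor]
  push_cast
  ring

theorem signedErr_succ (hα : Irrational α) :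
    ∀ n, signedErr α (n + 1) = -Int.fract (cq α (n + 1)) * signedErr α n
  | 0 => by
    have hf : Int.fract α ≠ 0 := (fract_cq_pos hα 0).ne'
    have hfract : Int.fract (cq α 1) = 1 / Int.fract α - pq α 1 := (Int.self_sub_floor _).symm
    rw [signedErr_one, signedErr_zero, hfract]
    field_simp
    ring
  | n + 1 => by
    have hf : Int.fract (cq α (n + 1)) ≠ 0 := (fract_cq_pos hα (n + 1)).ne'
    have hfract : Int.fract (cq α (n + 2)) = 1 / Int.fract (cq α (n + 1)) - pq α (n + 2) :=
      (Int.self_sub_floor _).symm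
    rw [signedErr_add_two, signedErr_succ hα n, hfract]
    field_simp
    ring

theorem neg_one_pow_mul_signedErr_pos (hα : Irrational α) : ∀ n, 0 < (-1) ^ n * signedErr α n
  | 0 => by
    rw [pow_zero, one_mul, signedErr_zero]
    exact fract_cq_pos hα 0
  | n + 1 => by
    calc 0 < Int.fract (cq α (n + 1)) * ((-1) ^ n * signedErr α n) :=
          mul_pos (fract_cq_pos hα (n + 1)) (neg_one_pow_mul_signedErr_pos hα n)
      _ = _ := by rw [signedErr_succ hα, pow_succ]; ring

theorem xi_eq_neg_one_pow_mul_signedErr (hα : Irrational α) (n : ℕ) :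
    xi α n = (-1) ^ n * signedErr α n := by
  rw [← abs_of_pos (neg_one_pow_mul_signedErr_pos hα n), abs_mul, abs_neg_one_pow, one_mul]
  rfl

theorem xi_pos (hα : Irrational α) (n : ℕ) : 0 < xi α n :=
  xi_eq_neg_one_pow_mul_signedErr hα n ▸ neg_one_pow_mul_signedErr_pos hα n

theorem xi_eq_pq_mul_xi_add_xi (hα : Irrational α) (n : ℕ) :
    xi α n = pq α (n + 2) * xi α (n + 1) + xi α (n + 2) := by
  simp only [xi_eq_neg_one_pow_mul_signedErr hα, signedErr_add_two, pow_succ]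
  ring

theorem cden_mul_signedErr_sub_cden_mul_signedErr (α : ℝ) :
    ∀ n, cden α (n + 1) * signedErr α n - cden α n * signedErr α (n + 1) = (-1) ^ n
  | 0 => by
    show (cden α 1 : ℝ) * signedErr α 0 - cden α 0 * signedErr α 1 = (-1) ^ 0
    simp only [signedErr_zero, signedErr_one, cden]
    push_cast
    ring
  | n + 1 => by
    have ih := cden_mul_signedErr_sub_cden_mul_signedErr α n
    rw [signedErr_add_two, cast_cden_add_two, pow_succ]
    linear_combination -ih

theorem cden_mul_xi_add_cden_mul_xi (hα : Irrational α) (n : ℕ) :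
    cden α (n + 1) * xi α n + cden α n * xi α (n + 1) = 1 := by
  rw [xi_eq_neg_one_pow_mul_signedErr hα, xi_eq_neg_one_pow_mul_signedErr hα]
  calc _ = (-1) ^ n * (cden α (n + 1) * signedErr α n - cden α n * signedErr α (n + 1)) := by ring
    _ = 1 := by rw [cden_mul_signedErr_sub_cden_mul_signedErr, ← mul_pow]; norm_num

theorem cfval_map_pq_reverse (hα : Irrational α) : ∀ n,
    cfval ((List.range (n + 1)).map fun i => (pq α (n + 1 - i) : ℝ)) = cden α (n + 1) / cden α n
  | 0 => by simp [cfval, cden]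
  | n + 1 => by
    have hsplit : (List.range (n + 2)).map (fun i => (pq α (n + 2 - i) : ℝ))
        = (pq α (n + 2) : ℝ) :: (List.range (n + 1)).map fun i => (pq α (n + 1 - i) : ℝ) := by
      rw [List.range_succ_eq_map]
      simp [Function.comp_def]
    rw [hsplit, cfval.eq_2, cfval_map_pq_reverse hα n, cast_cden_add_two]
    field_simp [(cden_pos hα n).ne', (cden_pos hα (n + 1)).ne']

theorem revq_succ (hα : Irrational α) (n : ℕ) :
    revq α (n + 1) = cden α n / cden α (n + 1) := by
  rw [revq, cfval_map_pq_reverse hα, one_div_div]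

end ContinuedFraction

section Continuant

variable {β : ℝ}

/-- The continuant `⟨a_{m+2}, …, a_{m+j}⟩` of the partial quotients of `β`, with the conventions
`contFrom β m 0 = 0` and `contFrom β m 1 = 1`. -/
noncomputable def contFrom (β : ℝ) (m : ℕ) : ℕ → ℤ
  | 0 => 0
  | 1 => 1
  | j + 2 => pq β (m + j + 2) * contFrom β m (j + 1) + contFrom β m j

theorem contFrom_nonneg (hβ : Irrational β) (m j : ℕ) : 0 ≤ contFrom β m j :=
  recurrence_nonneg (x := contFrom β m) (fun k => zero_le_one.trans (one_le_pq hβ (m + k + 1)))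
    (fun _ => rfl) le_rfl zero_le_one j

theorem contFrom_mul_cden_lt (hβ : Irrational β) (m : ℕ) {j : ℕ} (hj : j ≠ 1) :
    contFrom β m j * cden β (m + 1) < cden β (m + j) := by
  set δ : ℕ → ℤ := fun k => cden β (m + k) - contFrom β m k * cden β (m + 1)
  have hcden : ∀ k,
      cden β (m + (k + 2)) = pq β (m + k + 2) * cden β (m + (k + 1)) + cden β (m + k) :=
    fun _ => rfl
  have hδ : ∀ k, δ (k + 2) = pq β (m + k + 2) * δ (k + 1) + δ k := fun k => by
    simp only [δ, contFrom, hcden]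
    ring
  have hδ₀ : 0 < δ 0 := by
    have := one_le_cden hβ m
    simp only [δ, contFrom, zero_mul, sub_zero, add_zero]
    omega
  suffices 0 < δ j by simpa [δ] using this
  obtain _ | _ | k := j
  · exact hδ₀
  · exact absurd rfl hj
  · exact hδ₀.trans_le (recurrence_zero_le (fun k => one_le_pq hβ (m + k + 1)) hδ hδ₀.le
      (by simp [δ, contFrom]) k)

theorem contFrom_mul_cden_le (hβ : Irrational β) (m j : ℕ) :
    contFrom β m j * cden β (m + 1) ≤ cden β (m + j) := by
  rcases eq_or_ne j 1 with rfl | hj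
  · simp [contFrom]
  · exact (contFrom_mul_cden_lt hβ m hj).le

theorem xi_eq_contFrom_mul_xi_add (hβ : Irrational β) (m : ℕ) : ∀ j,
    xi β m = contFrom β m (j + 1) * xi β (m + j) + contFrom β m j * xi β (m + j + 1)
  | 0 => by simp [contFrom]
  | j + 1 => by
    rw [xi_eq_contFrom_mul_xi_add hβ m j, xi_eq_pq_mul_xi_add_xi hβ (m + j)]
    simp only [contFrom, ← add_assoc]
    push_cast
    ring

theorem one_sub_mul_xi_sub_mul_xi (hβ : Irrational β) {m e : ℕ} {x y a : ℤ}
    (h : a * x + y = cden β (m + e + 1)) :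
    1 - (x * xi β m + y * xi β (m + e)) =
      (cden β (m + e) - x * contFrom β m e) * xi β (m + e + 1) +
        x * (a - contFrom β m (e + 1)) * xi β (m + e) := by
  have hy : (y : ℝ) = cden β (m + e + 1) - a * x := by rw [← h]; push_cast; ring
  rw [hy, xi_eq_contFrom_mul_xi_add hβ m e]
  linear_combination -cden_mul_xi_add_cden_mul_xi hβ (m + e)

theorem contFrom_le_of_mul_add_eq_cden (hβ : Irrational β) {m e : ℕ} {x y a : ℤ} (hx₀ : 0 ≤ x)
    (hyx : y ≤ x) (hx : x ≤ cden β (m + 1)) (ha : 1 ≤ a) (h : a * x + y = cden β (m + e + 1)) :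
    contFrom β m (e + 1) ≤ a := by
  obtain _ | e := e
  · simpa [contFrom] using ha
  by_contra! hlt
  have : a * x + y < cden β (m + (e + 2)) :=
    calc a * x + y ≤ (a + 1) * x := by linarith
      _ ≤ contFrom β m (e + 2) * x := mul_le_mul_of_nonneg_right hlt hx₀
      _ ≤ contFrom β m (e + 2) * cden β (m + 1) :=
          mul_le_mul_of_nonneg_left hx (contFrom_nonneg hβ m _)
      _ < cden β (m + (e + 2)) := contFrom_mul_cden_lt hβ m (by omega)
  exact this.ne h

theorem mul_xi_add_mul_xi_le_one (hβ : Irrational β) {m e : ℕ} {x y a : ℤ} (hx₀ : 0 ≤ x)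
    (hyx : y ≤ x) (hx : x ≤ cden β (m + 1)) (ha : 1 ≤ a) (h : a * x + y = cden β (m + e + 1)) :
    x * xi β m + y * xi β (m + e) ≤ 1 ∧
      (x * xi β m + y * xi β (m + e) = 1 → e = 1 ∧ x = cden β (m + 1)) := by
  have hxE : x * contFrom β m e ≤ contFrom β m e * cden β (m + 1) := by
    rw [mul_comm]
    exact mul_le_mul_of_nonneg_left hx (contFrom_nonneg hβ m e)
  have hfirst : 0 ≤ ((cden β (m + e) - x * contFrom β m e : ℤ) : ℝ) * xi β (m + e + 1) :=
    mul_nonneg (by exact_mod_cast sub_nonneg.2 (hxE.trans (contFrom_mul_cden_le hβ m e)))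
      (xi_pos hβ _).le
  have haE := contFrom_le_of_mul_add_eq_cden hβ hx₀ hyx hx ha h
  have hsecond : 0 ≤ ((x * (a - contFrom β m (e + 1)) : ℤ) : ℝ) * xi β (m + e) :=
    mul_nonneg (by exact_mod_cast mul_nonneg hx₀ (sub_nonneg.2 haE)) (xi_pos hβ _).le
  have hid := one_sub_mul_xi_sub_mul_xi hβ h
  push_cast at hfirst hsecond
  refine ⟨by linarith, fun hone => ?_⟩
  have hzero : ((cden β (m + e) - x * contFrom β m e : ℤ) : ℝ) * xi β (m + e + 1) = 0 := by
    push_cast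
    linarith
  have hr : x * contFrom β m e = cden β (m + e) := by
    rcases mul_eq_zero.1 hzero with h' | h'
    · exact (sub_eq_zero.1 (by exact_mod_cast h')).symm
    · exact absurd h' (xi_pos hβ _).ne'
  have he : e = 1 := by
    by_contra he
    exact (hr ▸ hxE).not_gt (contFrom_mul_cden_lt hβ m he)
  subst he
  simpa [contFrom] using hr

end Continuant

theorem stmt7 (α β : ℝ) (hα : Irrational α) (hβ : Irrational β)
    (ν μ d : ℕ) (hd : 1 ≤ d)
    (h1 : xi α ν ≤ xi β μ)
    (h2 : xi α (ν + 1) ≤ xi β (μ + d - 1))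
    (h3 : cden α (ν + 1) ≤ cden β (μ + 1))
    (h4 : cden α (ν + 2) = cden β (μ + d)) :
    xi α ν = xi β μ ∧ xi α (ν + 1) = xi β (μ + d - 1) ∧
    cden α (ν + 1) = cden β (μ + 1) ∧ d = 2 ∧
    revq α (ν + 2) = revq β (μ + 2) ∧ cden α (ν + 2) = cden β (μ + 2) := by
  obtain ⟨e, rfl⟩ : ∃ e, d = e + 1 := ⟨d - 1, by omega⟩
  rw [Nat.add_succ_sub_one] at h2 ⊢
  have hle₁ := mul_le_mul_of_nonneg_left h1 (cden_pos hα (ν + 1)).le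
  have hle₂ := mul_le_mul_of_nonneg_left h2 (cden_pos hα ν).le
  have hξ := cden_mul_xi_add_cden_mul_xi hα ν
  obtain ⟨hle, hcase⟩ := mul_xi_add_mul_xi_le_one hβ (zero_le_one.trans (one_le_cden hα _))
    (cden_le_cden_succ hα ν) h3 (one_le_pq hα (ν + 1)) h4
  have hone : cden α (ν + 1) * xi β μ + cden α ν * xi β (μ + e) = 1 :=
    le_antisymm hle (hξ ▸ add_le_add hle₁ hle₂)
  obtain ⟨rfl, hx⟩ := hcase hone
  obtain ⟨hξ₀, hξ₁⟩ := (add_eq_add_iff_eq_and_eq hle₁ hle₂).1 (hξ.trans hone.symm)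
  refine ⟨mul_left_cancel₀ (cden_pos hα _).ne' hξ₀, mul_left_cancel₀ (cden_pos hα _).ne' hξ₁,
    hx, rfl, ?_, h4⟩
  rw [revq_succ hα, revq_succ hβ, hx, h4]
end

section
/- If 1, α, β are linearly independent over ℚ, then α and β are incommensurable: ψ_α(t) ≠ ψ_β(t) for all sufficiently large t. -/
lemma psi_attained (α t : ℝ) (ht : 1 ≤ t) :
    ∃ q : ℕ, 0 < q ∧ (q : ℝ) ≤ t ∧ psi α t = distZ ((q : ℝ) * α) := by
  set S := {v : ℝ | ∃ q : ℕ, 0 < q ∧ (q : ℝ) ≤ t ∧ v = distZ ((q : ℝ) * α)} with hS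
  have hfin : S.Finite := by
    apply Set.Finite.subset (Set.Finite.image (fun q : ℕ => distZ ((q : ℝ) * α))
      (Set.finite_Iic ⌈t⌉₊))
    rintro v ⟨q, hq, hqt, rfl⟩
    exact ⟨q, Nat.cast_le.mp (hqt.trans (Nat.le_ceil t)), rfl⟩
  have hne : S.Nonempty := ⟨distZ ((1 : ℕ) * α), 1, one_pos, by simpa using ht, rfl⟩
  exact hne.csInf_mem hfin

theorem stmt17 (α β : ℝ) (h : LinearIndependent ℚ ![(1 : ℝ), α, β]) :
    ∃ T : ℝ, ∀ t : ℝ, T ≤ t → psi α t ≠ psi β t := by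
  refine ⟨1, fun t ht heq => ?_⟩
  obtain ⟨q, hq, hqt, hqe⟩ := psi_attained α t ht
  obtain ⟨r, hr, hrt, hre⟩ := psi_attained β t ht
  rw [hqe, hre] at heq
  unfold distZ at heq
  have hli := Fintype.linearIndependent_iff.mp h
  rcases abs_eq_abs.mp heq with hc | hc
  · -- qα - m = rβ - n, so (n-m) + qα - rβ = 0
    have h0 : ((round ((r:ℝ)*β) - round ((q:ℝ)*α) : ℤ) : ℝ) + (q : ℝ) * α + (-(r:ℚ) : ℝ) * β = 0 := by
      push_cast
      linarith
    have := hli ![((round ((r:ℝ)*β) - round ((q:ℝ)*α) : ℤ) : ℚ), (q : ℚ), -(r:ℚ)]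
      (by
        rw [Fin.sum_univ_three]
        simp only [Matrix.cons_val_zero, Matrix.cons_val_one, Matrix.head_cons,
          Matrix.cons_val_two, Matrix.tail_cons, Rat.smul_def]
        push_cast
        push_cast at h0
        linarith) 1
    simp at this
    omega
  · -- qα - m = -(rβ - n), so -(n+m)... : m+n... qα + rβ - (m+n) = 0
    have h0 : ((- round ((r:ℝ)*β) - round ((q:ℝ)*α) : ℤ) : ℝ) + (q : ℝ) * α + ((r:ℚ) : ℝ) * β = 0 := by
      push_cast
      linarith
    have := hli ![((- round ((r:ℝ)*β) - round ((q:ℝ)*α) : ℤ) : ℚ), (q : ℚ), (r:ℚ)]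
      (by
        rw [Fin.sum_univ_three]
        simp only [Matrix.cons_val_zero, Matrix.cons_val_one, Matrix.head_cons,
          Matrix.cons_val_two, Matrix.tail_cons, Rat.smul_def]
        push_cast
        push_cast at h0
        linarith) 1
    simp at this
    omega
end

section
/- For Lebesgue-almost every α = (α₁, ..., αₙ) ∈ ℝⁿ, all n! orderings of (ψ_{α₁}(t), ..., ψ_{αₙ}(t)) occur for arbitrarily large t; that is, 𝔨(α) = n!. -/
lemma distZ_nonneg (x : ℝ) : 0 ≤ distZ x := abs_nonneg _

lemma distZ_le (x : ℝ) (m : ℤ) : distZ x ≤ |x - m| := by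
  rcases eq_or_ne m (round x) with rfl | h
  · exact le_rfl
  · have h1 : |x - round x| ≤ 1/2 := abs_sub_round x
    have h2 : (1:ℝ) ≤ |(m : ℝ) - round x| := by
      have : (m : ℝ) - round x ≠ 0 := by
        simp only [sub_ne_zero]; exact_mod_cast h
      calc (1:ℝ) = (1 : ℤ) := by norm_num
      _ ≤ |(m : ℝ) - (round x : ℝ)| := by
          rw [show ((m:ℝ) - (round x : ℝ)) = ((m - round x : ℤ) : ℝ) by push_cast; ring]
          exact_mod_cast Int.one_le_abs (by exact_mod_cast this)
    have h3 : |(m:ℝ) - round x| ≤ |x - m| + |x - round x| := by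
      have := abs_sub (x - (round x:ℝ)) (x - m)
      calc |(m:ℝ) - round x| = |(x - round x) - (x - m)| := by ring_nf
        _ ≤ |x - round x| + |x - m| := abs_sub _ _
        _ = |x - m| + |x - round x| := by ring
    unfold distZ
    linarith

lemma distZ_lipschitz (x y : ℝ) : distZ x ≤ distZ y + |x - y| := by
  calc distZ x ≤ |x - round y| := distZ_le x (round y)
    _ = |(y - round y) + (x - y)| := by ring_nf
    _ ≤ |y - round y| + |x - y| := abs_add_le _ _
    _ = distZ y + |x - y| := rfl

lemma continuous_distZ : Continuous distZ := by
  have : LipschitzWith 1 distZ := by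
    apply LipschitzWith.of_dist_le_mul
    intro x y
    simp only [Real.dist_eq, NNReal.coe_one, one_mul]
    rw [abs_sub_le_iff]
    constructor
    · linarith [distZ_lipschitz x y]
    · have := distZ_lipschitz y x
      rw [abs_sub_comm] at this
      linarith
  exact this.continuous

/-- the "small" set: points whose psi at time N is < a -/
def KSmall (N : ℕ) (a : ℝ) : Set ℝ :=
  {β | ∃ q : ℕ, 0 < q ∧ q ≤ N ∧ distZ ((q : ℝ) * β) < a}

lemma psi_lt_iff {β : ℝ} {N : ℕ} (hN : 1 ≤ N) {a : ℝ} :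
    psi β (N : ℝ) < a ↔ β ∈ KSmall N a := by
  have hne : {v : ℝ | ∃ q : ℕ, 0 < q ∧ (q : ℝ) ≤ (N:ℝ) ∧ v = distZ ((q : ℝ) * β)}.Nonempty := by
    exact ⟨distZ ((1:ℕ) * β), 1, one_pos, by exact_mod_cast hN, rfl⟩
  have hbdd : BddBelow {v : ℝ | ∃ q : ℕ, 0 < q ∧ (q : ℝ) ≤ (N:ℝ) ∧ v = distZ ((q : ℝ) * β)} := by
    exact ⟨0, fun v ⟨q, _, _, hv⟩ => hv ▸ distZ_nonneg _⟩
  constructor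
  · intro h
    obtain ⟨v, ⟨q, hq0, hqN, rfl⟩, hva⟩ := (csInf_lt_iff hbdd hne).mp h
    exact ⟨q, hq0, by exact_mod_cast hqN, hva⟩
  · rintro ⟨q, hq0, hqN, hd⟩
    calc psi β (N:ℝ) ≤ distZ ((q:ℝ) * β) :=
          csInf_le hbdd ⟨q, hq0, by exact_mod_cast hqN, rfl⟩
      _ < a := hd

lemma isOpen_ksmall (N : ℕ) (a : ℝ) : IsOpen (KSmall N a) := by
  have : KSmall N a = ⋃ q : ℕ, ⋃ (_ : 0 < q ∧ q ≤ N), {β | distZ ((q:ℝ) * β) < a} := by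
    ext β; simp [KSmall]; tauto
  rw [this]
  exact isOpen_iUnion fun q => isOpen_iUnion fun _ =>
    isOpen_lt (continuous_distZ.comp (continuous_const.mul continuous_id)) continuous_const

lemma measurableSet_ksmall (N : ℕ) (a : ℝ) : MeasurableSet (KSmall N a) :=
  (isOpen_ksmall N a).measurableSet

lemma ksmall_mono {N : ℕ} {a b : ℝ} (h : a ≤ b) : KSmall N a ⊆ KSmall N b :=
  fun β ⟨q, h1, h2, h3⟩ => ⟨q, h1, h2, lt_of_lt_of_le h3 h⟩

open MeasureTheory

lemma harmonic_le_sqrt : ∀ N : ℕ, ∑ q ∈ Finset.Icc 1 N, (1 / (q:ℝ)) ≤ 2 * Real.sqrt N := by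
  intro N
  induction N with
  | zero => simp
  | succ n ih =>
    rw [Finset.sum_Icc_succ_top (by omega : 1 ≤ n + 1)]
    have h1 : Real.sqrt n ≤ Real.sqrt (n+1) := Real.sqrt_le_sqrt (by push_cast; linarith)
    have hs : Real.sqrt ((n:ℝ)+1) * Real.sqrt ((n:ℝ)+1) = (n:ℝ)+1 :=
      Real.mul_self_sqrt (by positivity)
    have hpos : (0:ℝ) < (n:ℝ) + 1 := by positivity
    have hs1 : (1:ℝ) ≤ Real.sqrt ((n:ℝ)+1) := by
      nlinarith [Real.sqrt_nonneg ((n:ℝ)+1)]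
    have key : 1 / ((n:ℝ)+1) ≤ 2 * Real.sqrt (n+1) - 2 * Real.sqrt n := by
      have hsn : Real.sqrt (n:ℝ) * Real.sqrt (n:ℝ) = (n:ℝ) := Real.mul_self_sqrt (by positivity)
      have h2 : Real.sqrt n + Real.sqrt (n+1) ≤ 2 * ((n:ℝ)+1) := by
        nlinarith [Real.sqrt_nonneg (n:ℝ), Real.sqrt_nonneg ((n:ℝ)+1)]
      rw [div_le_iff₀ hpos] at *
      nlinarith [Real.sqrt_nonneg (n:ℝ), Real.sqrt_nonneg ((n:ℝ)+1)]
    push_cast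
    push_cast at ih key
    linarith

example : True := trivial

open MeasureTheory ENNReal
open scoped ENNReal

lemma lemA (x r a : ℝ) (N : ℕ) (hr : 0 < r) (ha : 0 < a) (ha2 : a ≤ 1/2) :
    volume (KSmall N a ∩ Set.Icc (x - r) (x + r)) ≤
      ENNReal.ofReal (4*r*a*N + 8*a*Real.sqrt N) := by
  classical
  -- covering
  have hcov : KSmall N a ∩ Set.Icc (x - r) (x + r) ⊆
      ⋃ q ∈ Finset.Icc 1 N, ⋃ m ∈ Finset.Icc ⌈(q:ℝ)*(x-r)-a⌉ ⌊(q:ℝ)*(x+r)+a⌋,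
        Set.Ioo (((m:ℝ)-a)/(q:ℝ)) (((m:ℝ)+a)/(q:ℝ)) := by
    rintro β ⟨⟨q, hq0, hqN, hd⟩, hβI⟩
    have hqR : (0:ℝ) < (q:ℝ) := by exact_mod_cast hq0
    set m : ℤ := round ((q:ℝ)*β) with hm
    have habs : |(q:ℝ)*β - m| < a := hd
    rw [abs_lt] at habs
    have hβ1 : x - r ≤ β := hβI.1
    have hβ2 : β ≤ x + r := hβI.2
    simp only [Set.mem_iUnion]
    refine ⟨q, Finset.mem_Icc.mpr ⟨hq0, hqN⟩, m, ?_, ?_⟩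
    · rw [Finset.mem_Icc]
      constructor
      · rw [Int.ceil_le]
        have : (q:ℝ)*(x-r) ≤ (q:ℝ)*β := by
          apply mul_le_mul_of_nonneg_left hβ1 hqR.le
        linarith
      · rw [Int.le_floor]
        have : (q:ℝ)*β ≤ (q:ℝ)*(x+r) := by
          apply mul_le_mul_of_nonneg_left hβ2 hqR.le
        linarith
    · rw [Set.mem_Ioo]
      constructor
      · rw [div_lt_iff₀ hqR]; linarith
      · rw [lt_div_iff₀ hqR]; linarith
  calc volume (KSmall N a ∩ Set.Icc (x - r) (x + r))
      ≤ ∑ q ∈ Finset.Icc 1 N, ∑ m ∈ Finset.Icc ⌈(q:ℝ)*(x-r)-a⌉ ⌊(q:ℝ)*(x+r)+a⌋,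
          volume (Set.Ioo (((m:ℝ)-a)/(q:ℝ)) (((m:ℝ)+a)/(q:ℝ))) := by
        refine le_trans (measure_mono hcov) ?_
        refine le_trans (measure_biUnion_finset_le _ _) ?_
        exact Finset.sum_le_sum fun q _ => measure_biUnion_finset_le _ _
    _ ≤ ENNReal.ofReal (4*r*a*N + 8*a*Real.sqrt N) := by
        have hstep : ∀ q ∈ Finset.Icc 1 N,
            ∑ m ∈ Finset.Icc ⌈(q:ℝ)*(x-r)-a⌉ ⌊(q:ℝ)*(x+r)+a⌋,
              volume (Set.Ioo (((m:ℝ)-a)/(q:ℝ)) (((m:ℝ)+a)/(q:ℝ)))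
            ≤ ENNReal.ofReal (4*r*a + 4*a/q) := by
          intro q hq
          rw [Finset.mem_Icc] at hq
          have hqR : (0:ℝ) < (q:ℝ) := by exact_mod_cast hq.1
          have hvol : ∀ m : ℤ, volume (Set.Ioo (((m:ℝ)-a)/(q:ℝ)) (((m:ℝ)+a)/(q:ℝ)))
              = ENNReal.ofReal (2*a/q) := by
            intro m
            rw [Real.volume_Ioo]
            congr 1
            field_simp
            ring
          simp only [hvol, Finset.sum_const]
          have hcard : ((Finset.Icc ⌈(q:ℝ)*(x-r)-a⌉ ⌊(q:ℝ)*(x+r)+a⌋).card : ℝ)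
              ≤ 2*r*q + 2 := by
            rw [Int.card_Icc]
            have h1 : (⌊(q:ℝ)*(x+r)+a⌋ : ℝ) ≤ (q:ℝ)*(x+r)+a := Int.floor_le _
            have h2 : (q:ℝ)*(x-r)-a ≤ (⌈(q:ℝ)*(x-r)-a⌉ : ℝ) := Int.le_ceil _
            rcases le_or_gt (⌊(q:ℝ)*(x+r)+a⌋ + 1 - ⌈(q:ℝ)*(x-r)-a⌉) 0 with h | h
            · rw [Int.toNat_of_nonpos h]
              simp
              nlinarith
            · have hcast : (((⌊(q:ℝ)*(x+r)+a⌋ + 1 - ⌈(q:ℝ)*(x-r)-a⌉).toNat : ℕ) : ℝ)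
                  = ((⌊(q:ℝ)*(x+r)+a⌋ + 1 - ⌈(q:ℝ)*(x-r)-a⌉ : ℤ) : ℝ) := by
                exact_mod_cast congrArg (fun z : ℤ => (z:ℝ))
                  (Int.toNat_of_nonneg h.le)
              rw [hcast]
              push_cast
              nlinarith
          rw [nsmul_eq_mul]
          calc ((Finset.Icc ⌈(q:ℝ)*(x-r)-a⌉ ⌊(q:ℝ)*(x+r)+a⌋).card : ℝ≥0∞) * ENNReal.ofReal (2*a/q)
              = ENNReal.ofReal (((Finset.Icc ⌈(q:ℝ)*(x-r)-a⌉ ⌊(q:ℝ)*(x+r)+a⌋).card : ℝ) * (2*a/q)) := by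
                rw [ENNReal.ofReal_mul (by positivity)]
                congr 1
                simp [ENNReal.ofReal_natCast]
            _ ≤ ENNReal.ofReal ((2*r*q+2) * (2*a/q)) := by
                apply ENNReal.ofReal_le_ofReal
                apply mul_le_mul_of_nonneg_right hcard (by positivity)
            _ = ENNReal.ofReal (4*r*a + 4*a/q) := by
                congr 1
                field_simp
                ring
        refine le_trans (Finset.sum_le_sum hstep) ?_
        rw [← ENNReal.ofReal_sum_of_nonneg (fun q hq => by
          have : (1:ℕ) ≤ q := (Finset.mem_Icc.mp hq).1
          have : (0:ℝ) < (q:ℝ) := by exact_mod_cast this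
          positivity)]
        apply ENNReal.ofReal_le_ofReal
        rw [Finset.sum_add_distrib, Finset.sum_const, Nat.card_Icc]
        have hsum : ∑ q ∈ Finset.Icc 1 N, 4*a/(q:ℝ) ≤ 8*a*Real.sqrt N := by
          have := harmonic_le_sqrt N
          have h4a : (0:ℝ) ≤ 4*a := by positivity
          calc ∑ q ∈ Finset.Icc 1 N, 4*a/(q:ℝ) = (4*a) * ∑ q ∈ Finset.Icc 1 N, 1/(q:ℝ) := by
                rw [Finset.mul_sum]; congr 1; ext q; ring
            _ ≤ (4*a) * (2*Real.sqrt N) := by nlinarith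
            _ = 8*a*Real.sqrt N := by ring
        have hcN : ((N + 1 - 1 : ℕ) : ℝ) = (N:ℝ) := by push_cast; simp
        calc (N + 1 - 1) • (4*r*a) + ∑ q ∈ Finset.Icc 1 N, 4*a/(q:ℝ)
            ≤ ((N + 1 - 1 : ℕ):ℝ) * (4*r*a) + 8*a*Real.sqrt N := by
              rw [nsmul_eq_mul]; linarith
          _ = 4*r*a*N + 8*a*Real.sqrt N := by rw [hcN]; ring

lemma dirichlet_rat (β : ℝ) {N : ℕ} (hN : 0 < N) :
    ∃ v : ℚ, v.den ≤ N ∧ |β - (v:ℝ)| ≤ 1/((v.den:ℝ) * N) := by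
  obtain ⟨j, k, hk0, hkN, h⟩ := Real.exists_int_int_abs_mul_sub_le β hN
  set v : ℚ := (j : ℚ) / (k : ℚ) with hv
  have hkR : (0:ℝ) < (k:ℝ) := by exact_mod_cast hk0
  have hNR : (0:ℝ) < (N:ℝ) := by exact_mod_cast hN
  have hden : (v.den : ℤ) ≤ k := by
    have hdvd : ((Rat.divInt j k).den : ℤ) ∣ k := Rat.den_dvd j k
    rw [Rat.divInt_eq_div] at hdvd
    have hdvd2 : (v.den : ℤ) ∣ k := by rw [hv]; exact_mod_cast hdvd
    exact Int.le_of_dvd hk0 hdvd2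
  have hdenpos : 0 < v.den := v.pos
  have hdenR : (0:ℝ) < (v.den:ℝ) := by exact_mod_cast hdenpos
  have hdenk : (v.den : ℝ) ≤ (k:ℝ) := by exact_mod_cast hden
  refine ⟨v, ?_, ?_⟩
  · have : (v.den : ℤ) ≤ (N : ℤ) := le_trans hden hkN
    exact_mod_cast this
  · have hcast : (v : ℝ) = (j:ℝ)/(k:ℝ) := by rw [hv]; push_cast; ring
    have e1 : β - (v:ℝ) = ((k:ℝ)*β - j)/(k:ℝ) := by
      rw [hcast]; field_simp; try ring
    rw [e1, abs_div, abs_of_pos hkR]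
    calc |(k:ℝ)*β - j| / (k:ℝ) ≤ (1/((N:ℝ)+1)) / (k:ℝ) := by
          gcongr
      _ = 1/(((N:ℝ)+1) * (k:ℝ)) := by rw [div_div]
      _ ≤ 1/((v.den:ℝ) * N) := by
          apply one_div_le_one_div_of_le (by positivity)
          nlinarith

lemma rat_sep (v w : ℚ) (hvw : v ≠ w) :
    1/((v.den:ℝ)*(w.den:ℝ)) ≤ |(v:ℝ) - (w:ℝ)| := by
  have hv : (0:ℝ) < (v.den:ℝ) := by exact_mod_cast v.pos
  have hw : (0:ℝ) < (w.den:ℝ) := by exact_mod_cast w.pos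
  have e : (v:ℝ) - (w:ℝ) = ((v.num * w.den - w.num * v.den : ℤ) : ℝ)/((v.den:ℝ)*(w.den:ℝ)) := by
    rw [Rat.cast_def, Rat.cast_def]
    push_cast
    field_simp
  have hne : (v.num * (w.den:ℤ) - w.num * (v.den:ℤ)) ≠ 0 := by
    intro hzero
    apply hvw
    apply (Rat.cast_injective (α := ℝ))
    have : ((v.num * w.den - w.num * v.den : ℤ) : ℝ) = 0 := by exact_mod_cast hzero
    have h2 : (v:ℝ) - (w:ℝ) = 0 := by rw [e, this]; simp
    linarith [h2]
  have hone : (1:ℝ) ≤ |((v.num * w.den - w.num * v.den : ℤ) : ℝ)| := by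
    rw [← Int.cast_abs]
    exact_mod_cast Int.one_le_abs hne
  rw [e, abs_div, abs_of_pos (by positivity : (0:ℝ) < (v.den:ℝ)*(w.den:ℝ))]
  exact div_le_div_of_nonneg_right hone (by positivity)

lemma ioo_disjoint {c c' ρ ρ' : ℝ} (h : ρ + ρ' ≤ |c - c'|) :
    Disjoint (Set.Ioo (c - ρ) (c + ρ)) (Set.Ioo (c' - ρ') (c' + ρ')) := by
  rw [Set.disjoint_left]
  rintro β ⟨h1, h2⟩ ⟨h3, h4⟩
  have : |c - c'| < ρ + ρ' := by
    rw [abs_sub_lt_iff]; constructor <;> linarith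
  linarith

set_option maxHeartbeats 1000000 in
lemma lemB (x r ε : ℝ) (hr : 0 < r) (hε : 0 < ε) (hε2 : ε ≤ 1/4) :
    ∃ N₀ : ℕ, ∀ N : ℕ, N₀ ≤ N →
      ENNReal.ofReal (ε*r/4) ≤ volume (KSmall N (ε/N) ∩ Set.Icc (x-r) (x+r)) := by
  classical
  refine ⟨⌈8/r⌉₊ + 1, fun N hN => ?_⟩
  have hN1 : 1 ≤ N := le_trans (by omega) hN
  have hN0 : 0 < N := hN1
  have hNR : (0:ℝ) < N := by exact_mod_cast hN0
  have hNr : 8/r ≤ (N:ℝ) := by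
    calc 8/r ≤ (⌈8/r⌉₊ : ℝ) := Nat.le_ceil _
      _ ≤ N := by exact_mod_cast le_trans (by omega) hN
  have h8N : 8 ≤ r * N := by
    rw [div_le_iff₀ hr] at hNr; linarith
  set g : ℕ → ℝ := fun k => (x - r/2) + k/(N:ℝ)^2 with hg
  set K : ℕ := ⌊r * (N:ℝ)^2⌋₊ with hK
  have hKle : (K:ℝ) ≤ r * N^2 := Nat.floor_le (by positivity)
  have hKge : r * (N:ℝ)^2 / 2 ≤ (K:ℝ) := by
    have hN1R : (1:ℝ) ≤ (N:ℝ) := by exact_mod_cast hN1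
    have h2 : (2:ℝ) ≤ r*(N:ℝ)^2 := by nlinarith [h8N, hN1R]
    have h3 : r * (N:ℝ)^2 < K + 1 := Nat.lt_floor_add_one _
    linarith
  have hF : ∀ k : ℕ, ∃ v : ℚ, v.den ≤ N ∧ |g k - (v:ℝ)| ≤ 1/((v.den:ℝ)*N) :=
    fun k => dirichlet_rat (g k) hN0
  choose F hFden hFapp using hF
  set V : Finset ℚ := (Finset.range K).image F with hV
  set J : ℚ → Set ℝ :=
    fun v => Set.Ioo ((v:ℝ) - ε/((v.den:ℝ)*N)) ((v:ℝ) + ε/((v.den:ℝ)*N)) with hJ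
  have hdpos : ∀ v : ℚ, (0:ℝ) < (v.den:ℝ) := fun v => by exact_mod_cast v.pos
  have hdV : ∀ v ∈ V, (v.den:ℝ) ≤ N := by
    intro v hv
    rw [hV, Finset.mem_image] at hv
    obtain ⟨k, _, rfl⟩ := hv
    exact_mod_cast hFden k
  -- inclusion
  have hsub : ∀ v ∈ V, J v ⊆ KSmall N (ε/N) ∩ Set.Icc (x-r) (x+r) := by
    intro v hv β hβ
    rw [hV, Finset.mem_image] at hv
    obtain ⟨k, hk, hkv⟩ := hv
    rw [Finset.mem_range] at hk
    have hdenN : v.den ≤ N := by rw [← hkv]; exact hFden k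
    have hdenNR : (v.den : ℝ) ≤ (N:ℝ) := by exact_mod_cast hdenN
    have hdvp := hdpos v
    have hβv : |β - (v:ℝ)| < ε/((v.den:ℝ)*N) := by
      rw [hJ] at hβ
      obtain ⟨h1, h2⟩ := hβ
      rw [abs_sub_lt_iff]; constructor <;> linarith
    constructor
    · refine ⟨v.den, v.pos, hdenN, ?_⟩
      have hnum : ((v.den:ℝ)) * β - (v.num:ℝ) = (v.den:ℝ) * (β - (v:ℝ)) := by
        rw [Rat.cast_def]
        field_simp
      calc distZ ((v.den:ℝ) * β) ≤ |(v.den:ℝ) * β - (v.num:ℝ)| := distZ_le _ v.num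
        _ = (v.den:ℝ) * |β - (v:ℝ)| := by rw [hnum, abs_mul, abs_of_pos (hdpos v)]
        _ < (v.den:ℝ) * (ε/((v.den:ℝ)*N)) := by
            exact mul_lt_mul_of_pos_left hβv (hdpos v)
        _ = ε/N := by field_simp
    · -- β ∈ Icc (x-r) (x+r)
      have hgkx : g k - x = (k:ℝ)/(N:ℝ)^2 - r/2 := by rw [hg]; ring
      have hgk : |g k - x| ≤ r/2 := by
        have h1 : (0:ℝ) ≤ (k:ℝ)/(N:ℝ)^2 := by positivity
        have h2 : (k:ℝ)/(N:ℝ)^2 ≤ r := by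
          rw [div_le_iff₀ (by positivity)]
          have : (k:ℝ) ≤ K := by exact_mod_cast hk.le
          nlinarith
        rw [hgkx, abs_le]; constructor <;> linarith
      have hvg : |(v:ℝ) - g k| ≤ 1/N := by
        have hh := hFapp k
        rw [hkv] at hh
        rw [abs_sub_comm] at hh
        calc |(v:ℝ) - g k| ≤ 1/((v.den:ℝ)*N) := hh
          _ ≤ 1/N := by
            apply one_div_le_one_div_of_le hNR
            have h1 : (1:ℝ) ≤ (v.den:ℝ) := by exact_mod_cast v.pos
            nlinarith [h1, hNR]
      have hβv2 : |β - (v:ℝ)| ≤ 1/N := by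
        calc |β - (v:ℝ)| ≤ ε/((v.den:ℝ)*N) := hβv.le
          _ ≤ 1/N := by
            rw [div_le_div_iff₀ (by positivity) hNR]
            have h1 : (1:ℝ) ≤ (v.den:ℝ) := by exact_mod_cast v.pos
            nlinarith
      have h8 : (1:ℝ)/N ≤ r/8 := by
        rw [div_le_div_iff₀ hNR (by norm_num)]
        nlinarith
      have habsx : |β - x| ≤ r := by
        calc |β - x| = |(β - (v:ℝ)) + ((v:ℝ) - g k) + (g k - x)| := by
              congr 1; ring
          _ ≤ |(β - (v:ℝ)) + ((v:ℝ) - g k)| + |g k - x| := abs_add_le _ _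
          _ ≤ |β - (v:ℝ)| + |(v:ℝ) - g k| + |g k - x| := by
              linarith [abs_add_le (β - (v:ℝ)) ((v:ℝ) - g k)]
          _ ≤ 1/N + 1/N + r/2 := by linarith
          _ ≤ r := by linarith
      rw [Set.mem_Icc]
      rw [abs_le] at habsx
      constructor <;> linarith [habsx.1, habsx.2]
  -- disjointness
  have hdisj : (V : Set ℚ).PairwiseDisjoint J := by
    intro v hv w hw hvw
    simp only [Function.onFun, hJ]
    apply ioo_disjoint
    have hsep := rat_sep v w hvw
    have hdv := hdV v hv
    have hdw := hdV w hw
    have hdvp := hdpos v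
    have hdwp := hdpos w
    have e1 : ε/((v.den:ℝ)*N) ≤ 1/(2*((v.den:ℝ)*(w.den:ℝ))) := by
      rw [div_le_div_iff₀ (by positivity) (by positivity)]
      nlinarith [mul_le_mul_of_nonneg_left hdw hdvp.le, mul_pos hdvp hdwp,
        mul_nonneg (by linarith : (0:ℝ) ≤ 1/4 - ε) (mul_pos hdvp hdwp).le]
    have e2 : ε/((w.den:ℝ)*N) ≤ 1/(2*((v.den:ℝ)*(w.den:ℝ))) := by
      rw [div_le_div_iff₀ (by positivity) (by positivity)]
      nlinarith [mul_le_mul_of_nonneg_left hdv hdwp.le, mul_pos hdvp hdwp,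
        mul_nonneg (by linarith : (0:ℝ) ≤ 1/4 - ε) (mul_pos hdvp hdwp).le]
    have e3 : 1/(2*((v.den:ℝ)*(w.den:ℝ))) + 1/(2*((v.den:ℝ)*(w.den:ℝ)))
        = 1/((v.den:ℝ)*(w.den:ℝ)) := by
      field_simp
      norm_num
    linarith
  -- measure computation
  have hmeasJ : ∀ v : ℚ, volume (J v) = ENNReal.ofReal (2*ε/((v.den:ℝ)*N)) := by
    intro v
    rw [hJ]
    simp only
    rw [Real.volume_Ioo]
    congr 1
    ring
  have hJmeas : ∀ v ∈ V, MeasurableSet (J v) := fun v _ => measurableSet_Ioo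
  -- fiber counting
  have hfib : ∀ v ∈ V, (((Finset.range K).filter (fun k => F k = v)).card : ℝ)
      ≤ 2*N/(v.den:ℝ) + 1 := by
    intro v hv
    set fib := (Finset.range K).filter (fun k => F k = v) with hfibdef
    have hfibne : fib.Nonempty := by
      rw [hV, Finset.mem_image] at hv
      obtain ⟨k, hk, hkv⟩ := hv
      exact ⟨k, Finset.mem_filter.mpr ⟨hk, hkv⟩⟩
    set km := fib.min' hfibne with hkm
    have hkmmem : km ∈ fib := fib.min'_mem hfibne
    have happrox : ∀ k ∈ fib, |g k - (v:ℝ)| ≤ 1/((v.den:ℝ)*N) := by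
      intro k hk
      have := hFapp k
      rw [(Finset.mem_filter.mp hk).2] at this
      exact this
    have hstep : ∀ k ∈ fib, (k:ℝ) ≤ km + 2*N/(v.den:ℝ) := by
      intro k hk
      have h1 := happrox k hk
      have h2 := happrox km hkmmem
      have hgdiff : |g k - g km| ≤ 2/((v.den:ℝ)*N) := by
        calc |g k - g km| = |(g k - (v:ℝ)) - (g km - (v:ℝ))| := by ring_nf
          _ ≤ |g k - (v:ℝ)| + |g km - (v:ℝ)| := abs_sub _ _
          _ ≤ 2/((v.den:ℝ)*N) := by
              rw [show (2:ℝ)/((v.den:ℝ)*N) = 1/((v.den:ℝ)*N) + 1/((v.den:ℝ)*N) by ring]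
              linarith
      have hgkm : g k - g km = ((k:ℝ) - km)/(N:ℝ)^2 := by
        rw [hg]; push_cast; ring
      have : ((k:ℝ) - km)/(N:ℝ)^2 ≤ 2/((v.den:ℝ)*N) := by
        rw [← hgkm]
        exact le_trans (le_abs_self _) hgdiff
      rw [div_le_div_iff₀ (by positivity) (by positivity)] at this
      have hdvp := hdpos v
      rw [← sub_le_iff_le_add']
      rw [le_div_iff₀ hdvp]
      nlinarith [hNR]
    have hsubfib : fib ⊆ Finset.Icc km (km + ⌊2*N/(v.den:ℝ)⌋₊) := by
      intro k hk
      rw [Finset.mem_Icc]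
      refine ⟨fib.min'_le k hk, ?_⟩
      have := hstep k hk
      have hkmle : km ≤ k := fib.min'_le k hk
      have : ((k - km : ℕ) : ℝ) ≤ 2*N/(v.den:ℝ) := by
        push_cast [hkmle]
        linarith
      have := Nat.le_floor this
      omega
    calc (fib.card : ℝ) ≤ ((Finset.Icc km (km + ⌊2*N/(v.den:ℝ)⌋₊)).card : ℝ) := by
          exact_mod_cast Finset.card_le_card hsubfib
      _ = (⌊2*N/(v.den:ℝ)⌋₊ : ℝ) + 1 := by
          rw [Nat.card_Icc]
          have heq : km + ⌊2*N/(v.den:ℝ)⌋₊ + 1 - km = ⌊2*N/(v.den:ℝ)⌋₊ + 1 := by omega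
          rw [heq]; push_cast; ring
      _ ≤ 2*N/(v.den:ℝ) + 1 := by
          have := Nat.floor_le (by positivity : (0:ℝ) ≤ 2*N/(v.den:ℝ))
          linarith
  -- counting: K ≤ ∑ 3N/den
  have hcount : (K:ℝ) ≤ ∑ v ∈ V, 3*(N:ℝ)/(v.den:ℝ) := by
    have hcard := Finset.card_eq_sum_card_image F (Finset.range K)
    rw [Finset.card_range] at hcard
    have : (K:ℝ) = ∑ v ∈ V, (((Finset.range K).filter (fun k => F k = v)).card : ℝ) := by
      rw [hV]; exact_mod_cast hcard
    rw [this]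
    apply Finset.sum_le_sum
    intro v hv
    have h1 := hfib v hv
    have h2 : (1:ℝ) ≤ (N:ℝ)/(v.den:ℝ) := by
      rw [le_div_iff₀ (hdpos v)]
      simpa using hdV v hv
    have : 2*(N:ℝ)/(v.den:ℝ) + 1 ≤ 3*(N:ℝ)/(v.den:ℝ) := by
      rw [show (3:ℝ)*(N:ℝ)/(v.den:ℝ) = 2*(N:ℝ)/(v.den:ℝ) + (N:ℝ)/(v.den:ℝ) by ring]
      linarith
    linarith
  -- final chain
  calc ENNReal.ofReal (ε*r/4)
      ≤ ENNReal.ofReal (∑ v ∈ V, 2*ε/((v.den:ℝ)*N)) := by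
        apply ENNReal.ofReal_le_ofReal
        have hid : ∀ v ∈ V, 2*ε/((v.den:ℝ)*N) = (2*ε/(3*(N:ℝ)^2)) * (3*(N:ℝ)/(v.den:ℝ)) := by
          intro v hv
          have := hdpos v
          field_simp
        rw [Finset.sum_congr rfl hid, ← Finset.mul_sum]
        have hc : (2*ε/(3*(N:ℝ)^2)) * (K:ℝ) ≤ (2*ε/(3*(N:ℝ)^2)) * ∑ v ∈ V, 3*(N:ℝ)/(v.den:ℝ) := by
          apply mul_le_mul_of_nonneg_left hcount (by positivity)
        have hlow : ε*r/4 ≤ (2*ε/(3*(N:ℝ)^2)) * (K:ℝ) := by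
          have : (2*ε/(3*(N:ℝ)^2)) * (r * (N:ℝ)^2/2) ≤ (2*ε/(3*(N:ℝ)^2)) * (K:ℝ) := by
            apply mul_le_mul_of_nonneg_left hKge (by positivity)
          have heq : (2*ε/(3*(N:ℝ)^2)) * (r * (N:ℝ)^2/2) = ε*r/3 := by
            field_simp
          rw [heq] at this
          nlinarith [mul_pos hε hr]
        linarith
    _ = ∑ v ∈ V, ENNReal.ofReal (2*ε/((v.den:ℝ)*N)) := by
        rw [ENNReal.ofReal_sum_of_nonneg]
        intro v hv
        positivity
    _ = volume (⋃ v ∈ V, J v) := by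
        rw [measure_biUnion_finset hdisj hJmeas]
        exact Finset.sum_congr rfl fun v _ => (hmeasJ v).symm
    _ ≤ volume (KSmall N (ε/N) ∩ Set.Icc (x-r) (x+r)) := by
        apply measure_mono
        exact Set.iUnion₂_subset hsub

noncomputable def cseq (k : ℕ) : ℝ := (64:ℝ)⁻¹ ^ (k+2)

lemma cseq_pos (k : ℕ) : 0 < cseq k := by unfold cseq; positivity

lemma cseq_le (k : ℕ) : cseq k ≤ 1/4 := by
  unfold cseq
  calc (64:ℝ)⁻¹ ^ (k+2) ≤ (64:ℝ)⁻¹ ^ 2 :=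
        pow_le_pow_of_le_one (by norm_num) (by norm_num) (by omega)
    _ ≤ 1/4 := by norm_num

lemma cseq_anti {k k' : ℕ} (h : k ≤ k') : cseq k' ≤ cseq k :=
  pow_le_pow_of_le_one (by norm_num) (by norm_num) (by omega)

lemma cseq_succ (k : ℕ) : cseq (k+1) = cseq k / 64 := by
  unfold cseq
  rw [pow_succ]
  ring

noncomputable def Gset (n : ℕ) (k : ℕ) (N : ℕ) : Set ℝ :=
  if k = 0 then (KSmall N (cseq 0 / N))ᶜ
  else if k = n - 1 then KSmall N (cseq (k-1) / N)
  else KSmall N (cseq (k-1) / N) \ KSmall N (cseq k / N)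

lemma measurableSet_gset (n k N : ℕ) : MeasurableSet (Gset n k N) := by
  unfold Gset
  split
  · exact (measurableSet_ksmall _ _).compl
  split
  · exact measurableSet_ksmall _ _
  · exact (measurableSet_ksmall _ _).diff (measurableSet_ksmall _ _)

lemma gset_chain {n k k' N : ℕ} (hk : k < k') (hk' : k' ≤ n - 1) (hN : 1 ≤ N)
    {β β' : ℝ} (hβ : β ∈ Gset n k N) (hβ' : β' ∈ Gset n k' N) :
    psi β' (N:ℝ) < psi β (N:ℝ) := by
  have hk'0 : k' ≠ 0 := by omega
  have hkn : k ≠ n - 1 := by omega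
  have hsmall' : β' ∈ KSmall N (cseq (k'-1) / N) := by
    unfold Gset at hβ'
    rw [if_neg hk'0] at hβ'
    by_cases h : k' = n - 1
    · rwa [if_pos h] at hβ'
    · rw [if_neg h] at hβ'
      exact hβ'.1
  have hnot : β ∉ KSmall N (cseq k / N) := by
    unfold Gset at hβ
    by_cases h0 : k = 0
    · rw [if_pos h0] at hβ
      rw [h0]
      exact hβ
    · rw [if_neg h0, if_neg hkn] at hβ
      exact hβ.2
  have h1 : psi β' (N:ℝ) < cseq (k'-1) / N := (psi_lt_iff hN).mpr hsmall'
  have h2 : cseq k / N ≤ psi β (N:ℝ) := by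
    by_contra h
    push_neg at h
    exact hnot ((psi_lt_iff hN).mp h)
  have h3 : cseq (k'-1) ≤ cseq k := cseq_anti (by omega)
  have hNR : (0:ℝ) < N := by exact_mod_cast hN
  have : cseq (k'-1) / N ≤ cseq k / N := by
    gcongr
  linarith

noncomputable def dd (k : ℕ) : ℝ := if k = 0 then 1/2 else cseq (k-1)/16

lemma dd_pos (k : ℕ) : 0 < dd k := by
  unfold dd; split
  · norm_num
  · have := cseq_pos (k-1); positivity

lemma dd_le (k : ℕ) : dd k ≤ 1/2 := by
  unfold dd; split
  · norm_num
  · have := cseq_le (k-1); have := cseq_pos (k-1); linarith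

lemma gset_lower (n : ℕ) (x r : ℝ) (hr : 0 < r) :
    ∃ N₂ : ℕ, 1 ≤ N₂ ∧ ∀ N, N₂ ≤ N → ∀ k, k ≤ n - 1 →
      ENNReal.ofReal (dd k * (2*r)) ≤ volume (Gset n k N ∩ Set.Icc (x-r) (x+r)) := by
  classical
  have hB : ∀ j : ℕ, ∃ N₀ : ℕ, ∀ N : ℕ, N₀ ≤ N →
      ENNReal.ofReal (cseq j * r/4) ≤ volume (KSmall N (cseq j/N) ∩ Set.Icc (x-r) (x+r)) :=
    fun j => lemB x r (cseq j) hr (cseq_pos j) (cseq_le j)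
  choose N0f hN0f using hB
  refine ⟨max (max ((Finset.range (n+1)).sup N0f + 1) 1) (⌈(2/r)^2⌉₊ + 1), by omega, ?_⟩
  intro N hNbig k hk
  have hN1 : 1 ≤ N := by
    have := le_trans (le_max_left _ _) hNbig
    omega
  have hNR : (0:ℝ) < N := by exact_mod_cast hN1
  have hNsqrt : 2/r ≤ Real.sqrt N := by
    have h1 : ((2/r)^2 : ℝ) ≤ N := by
      have h2 : (⌈(2/r)^2⌉₊ : ℝ) ≤ N := by
        have : ⌈(2/r)^2⌉₊ ≤ N := by
          have := le_trans (le_max_right _ _) hNbig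
          omega
        exact_mod_cast this
      calc ((2/r)^2 : ℝ) ≤ (⌈(2/r)^2⌉₊ : ℝ) := Nat.le_ceil _
        _ ≤ N := h2
    calc 2/r = Real.sqrt ((2/r)^2) := (Real.sqrt_sq (by positivity)).symm
      _ ≤ Real.sqrt N := Real.sqrt_le_sqrt h1
  have hsqrtpos : 0 < Real.sqrt N := Real.sqrt_pos.mpr hNR
  -- upper bound helper
  have hup : ∀ j : ℕ, volume (KSmall N (cseq j/N) ∩ Set.Icc (x-r) (x+r))
      ≤ ENNReal.ofReal (8*r*cseq j) := by
    intro j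
    have hcp := cseq_pos j
    have hcl := cseq_le j
    have ha : (0:ℝ) < cseq j / N := by positivity
    have ha2 : cseq j / N ≤ 1/2 := by
      calc cseq j / N ≤ cseq j / 1 := by
            apply div_le_div_of_nonneg_left hcp.le (by norm_num)
            exact_mod_cast hN1
        _ = cseq j := div_one _
        _ ≤ 1/2 := le_trans hcl (by norm_num)
    refine le_trans (lemA x r (cseq j/N) N hr ha ha2) ?_
    apply ENNReal.ofReal_le_ofReal
    have e1 : 4*r*(cseq j/N)*N = 4*r*cseq j := by field_simp
    have hss : Real.sqrt N * Real.sqrt N = (N:ℝ) := Real.mul_self_sqrt hNR.le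
    have e2 : 8*(cseq j/N)*Real.sqrt N = 8*cseq j/Real.sqrt N := by
      field_simp
      linear_combination hss
    have e3 : 8*cseq j/Real.sqrt N ≤ 4*r*cseq j := by
      rw [div_le_iff₀ hsqrtpos]
      have h4 : 2 ≤ r * Real.sqrt N := by
        rw [div_le_iff₀ hr] at hNsqrt
        linarith
      nlinarith [Real.sqrt_nonneg (N:ℝ)]
    rw [e1, e2]
    linarith
  -- lemB instance
  have hlow : ∀ j, j ≤ n → ENNReal.ofReal (cseq j * r/4)
      ≤ volume (KSmall N (cseq j/N) ∩ Set.Icc (x-r) (x+r)) := by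
    intro j hj
    apply hN0f j N
    have h1 : N0f j ≤ (Finset.range (n+1)).sup N0f :=
      Finset.le_sup (Finset.mem_range.mpr (by omega))
    have h2 := le_trans (le_max_left _ _) (le_max_left _ _ |>.trans hNbig)
    omega
  -- case analysis on k
  have hIvol : volume (Set.Icc (x-r) (x+r)) = ENNReal.ofReal (2*r) := by
    rw [Real.volume_Icc]; congr 1; ring
  have hIfin : volume (Set.Icc (x-r) (x+r)) ≠ ⊤ := by
    rw [hIvol]; exact ENNReal.ofReal_ne_top
  by_cases h0 : k = 0
  · subst h0
    have hGeq : Gset n 0 N ∩ Set.Icc (x-r) (x+r)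
        = Set.Icc (x-r) (x+r) \ (KSmall N (cseq 0/N) ∩ Set.Icc (x-r) (x+r)) := by
      unfold Gset
      rw [if_pos rfl]
      ext β
      simp only [Set.mem_inter_iff, Set.mem_compl_iff, Set.mem_diff]
      tauto
    rw [hGeq]
    rw [measure_diff Set.inter_subset_right
      ((measurableSet_ksmall _ _).inter measurableSet_Icc).nullMeasurableSet
      (ne_top_of_le_ne_top hIfin (measure_mono Set.inter_subset_right))]
    apply ENNReal.le_sub_of_add_le_right
      (ne_top_of_le_ne_top hIfin (measure_mono Set.inter_subset_right))
    calc ENNReal.ofReal (dd 0 * (2*r)) + volume (KSmall N (cseq 0/N) ∩ Set.Icc (x-r) (x+r))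
        ≤ ENNReal.ofReal (dd 0 * (2*r)) + ENNReal.ofReal (8*r*cseq 0) := by
          exact add_le_add_right (hup 0) _
      _ = ENNReal.ofReal (dd 0 * (2*r) + 8*r*cseq 0) := by
          rw [ENNReal.ofReal_add (mul_nonneg (dd_pos 0).le (by linarith))
            (by nlinarith [cseq_pos 0])]
      _ ≤ volume (Set.Icc (x-r) (x+r)) := by
          rw [hIvol]
          apply ENNReal.ofReal_le_ofReal
          have hc0 : cseq 0 ≤ 1/4 := cseq_le 0
          have hc0p : 0 < cseq 0 := cseq_pos 0
          have hdd0 : dd 0 = 1/2 := by unfold dd; rw [if_pos rfl]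
          have hc0e : cseq 0 = ((64:ℝ)⁻¹)^2 := rfl
          rw [hdd0]
          nlinarith [hc0e, hr]
  · -- k ≥ 1
    have hk1 : 1 ≤ k := by omega
    have hddk : dd k * (2*r) = cseq (k-1) * r / 8 := by
      unfold dd
      rw [if_neg h0]
      ring
    have hck : cseq k = cseq (k-1) / 64 := by
      obtain ⟨m, rfl⟩ : ∃ m, k = m + 1 := ⟨k-1, by omega⟩
      simp only [Nat.add_sub_cancel]
      exact cseq_succ m
    have hlowk := hlow (k-1) (by omega)
    by_cases hlast : k = n - 1
    · have hGeq : Gset n k N = KSmall N (cseq (k-1)/N) := by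
        unfold Gset
        rw [if_neg h0, if_pos hlast]
      rw [hGeq, hddk]
      refine le_trans ?_ hlowk
      apply ENNReal.ofReal_le_ofReal
      nlinarith [mul_pos (cseq_pos (k-1)) hr]
    · have hGeq : Gset n k N = KSmall N (cseq (k-1)/N) \ KSmall N (cseq k/N) := by
        unfold Gset
        rw [if_neg h0, if_neg hlast]
      rw [hGeq]
      have hsub2 : (KSmall N (cseq (k-1)/N) ∩ Set.Icc (x-r) (x+r))
          \ (KSmall N (cseq k/N) ∩ Set.Icc (x-r) (x+r))
          ⊆ (KSmall N (cseq (k-1)/N) \ KSmall N (cseq k/N)) ∩ Set.Icc (x-r) (x+r) := by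
        intro β hβ
        simp only [Set.mem_diff, Set.mem_inter_iff] at *
        tauto
      refine le_trans ?_ (measure_mono hsub2)
      refine le_trans ?_ (le_measure_diff)
      apply ENNReal.le_sub_of_add_le_right
        (ne_top_of_le_ne_top hIfin (measure_mono Set.inter_subset_right))
      calc ENNReal.ofReal (dd k * (2*r)) + volume (KSmall N (cseq k/N) ∩ Set.Icc (x-r) (x+r))
          ≤ ENNReal.ofReal (dd k * (2*r)) + ENNReal.ofReal (8*r*cseq k) := by
            exact add_le_add_right (hup k) _
        _ = ENNReal.ofReal (dd k * (2*r) + 8*r*cseq k) := by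
            rw [ENNReal.ofReal_add (mul_nonneg (dd_pos k).le (by linarith))
              (by nlinarith [cseq_pos k])]
        _ ≤ ENNReal.ofReal (cseq (k-1) * r/4) := by
            apply ENNReal.ofReal_le_ofReal
            rw [hddk, hck]
            ring_nf
            nlinarith [cseq_pos (k-1)]
        _ ≤ _ := hlowk

noncomputable def Eset (n : ℕ) (σ : Equiv.Perm (Fin n)) (N : ℕ) : Set (Fin n → ℝ) :=
  Set.univ.pi fun i => Gset n (σ.symm i) N

lemma measurableSet_eset (n : ℕ) (σ : Equiv.Perm (Fin n)) (N : ℕ) :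
    MeasurableSet (Eset n σ N) :=
  MeasurableSet.univ_pi fun i => measurableSet_gset n (σ.symm i) N

lemma eset_ord {n : ℕ} {σ : Equiv.Perm (Fin n)} {N : ℕ} (hN : 1 ≤ N)
    {α : Fin n → ℝ} (hα : α ∈ Eset n σ N) :
    ∀ i j : Fin n, i < j → psi (α (σ j)) (N:ℝ) < psi (α (σ i)) (N:ℝ) := by
  intro i j hij
  have hi : α (σ i) ∈ Gset n i N := by
    have := hα (σ i) (Set.mem_univ _)
    simpa using this
  have hj : α (σ j) ∈ Gset n j N := by
    have := hα (σ j) (Set.mem_univ _)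
    simpa using this
  exact gset_chain (by exact_mod_cast hij) (by omega) hN hi hj

lemma eset_lower (n : ℕ) (σ : Equiv.Perm (Fin n)) (x : Fin n → ℝ) (r : ℝ) (hr : 0 < r) :
    ∃ N₂ : ℕ, 1 ≤ N₂ ∧ ∀ N, N₂ ≤ N →
      ENNReal.ofReal ((∏ k : Fin n, dd (k:ℕ)) * (2*r)^n)
        ≤ volume (Eset n σ N ∩ Metric.closedBall x r) := by
  classical
  have hco : ∀ i : Fin n, ∃ N₂ : ℕ, 1 ≤ N₂ ∧ ∀ N, N₂ ≤ N → ∀ k, k ≤ n - 1 →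
      ENNReal.ofReal (dd k * (2*r)) ≤ volume (Gset n k N ∩ Set.Icc (x i - r) (x i + r)) :=
    fun i => gset_lower n (x i) r hr
  choose N2f hN2f1 hN2f using hco
  refine ⟨(Finset.univ.sup N2f) + 1, by omega, fun N hN => ?_⟩
  have hNi : ∀ i : Fin n, N2f i ≤ N := by
    intro i
    have := Finset.le_sup (Finset.mem_univ i) (f := N2f)
    omega
  have hball : Metric.closedBall x r = Set.univ.pi fun i => Set.Icc (x i - r) (x i + r) := by
    rw [closedBall_pi x hr.le]
    have he : (fun b => Metric.closedBall (x b) r) = (fun i => Set.Icc (x i - r) (x i + r)) := by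
      funext i; exact Real.closedBall_eq_Icc
    rw [he]
  have hinter : Eset n σ N ∩ Metric.closedBall x r
      = Set.univ.pi fun i => Gset n (σ.symm i) N ∩ Set.Icc (x i - r) (x i + r) := by
    rw [hball]
    unfold Eset
    rw [← Set.pi_inter_distrib]
  rw [hinter, volume_pi_pi]
  calc ENNReal.ofReal ((∏ k : Fin n, dd (k:ℕ)) * (2*r)^n)
      = ∏ i : Fin n, ENNReal.ofReal (dd ((σ.symm i : Fin n) : ℕ) * (2*r)) := by
        rw [← ENNReal.ofReal_prod_of_nonneg (fun i _ =>
          mul_nonneg (dd_pos _).le (by linarith))]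
        congr 1
        rw [Finset.prod_mul_distrib, Finset.prod_const]
        congr 1
        · exact (Equiv.prod_comp σ.symm fun k : Fin n => dd (k:ℕ)).symm
        · simp
    _ ≤ ∏ i : Fin n, volume (Gset n (σ.symm i) N ∩ Set.Icc (x i - r) (x i + r)) := by
        apply Finset.prod_le_prod'
        intro i _
        apply hN2f i N (hNi i)
        omega

noncomputable def Bset (n : ℕ) (σ : Equiv.Perm (Fin n)) : Set (Fin n → ℝ) :=
  ⋂ M : ℕ, ⋃ N : ℕ, ⋃ (_ : M ≤ N), Eset n σ (N+1)

lemma measurableSet_bset (n : ℕ) (σ : Equiv.Perm (Fin n)) : MeasurableSet (Bset n σ) :=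
  MeasurableSet.iInter fun _ => MeasurableSet.iUnion fun N =>
    MeasurableSet.iUnion fun _ => measurableSet_eset n σ (N+1)

lemma bset_lower (n : ℕ) (σ : Equiv.Perm (Fin n)) (x : Fin n → ℝ) (r : ℝ) (hr : 0 < r) :
    ENNReal.ofReal (∏ k : Fin n, dd (k:ℕ)) * volume (Metric.closedBall x r)
      ≤ volume (Bset n σ ∩ Metric.closedBall x r) := by
  obtain ⟨N₂, hN₂1, hN₂⟩ := eset_lower n σ x r hr
  have hvolball : volume (Metric.closedBall x r) = ENNReal.ofReal ((2*r)^n) := by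
    rw [Real.volume_pi_closedBall x hr.le, Fintype.card_fin]
  have hδ : ENNReal.ofReal (∏ k : Fin n, dd (k:ℕ)) * volume (Metric.closedBall x r)
      = ENNReal.ofReal ((∏ k : Fin n, dd (k:ℕ)) * (2*r)^n) := by
    rw [hvolball, ← ENNReal.ofReal_mul (Finset.prod_nonneg fun k _ => (dd_pos _).le)]
  rw [hδ]
  set D : ℕ → Set (Fin n → ℝ) :=
    fun M => (⋃ N : ℕ, ⋃ (_ : M ≤ N), Eset n σ (N+1)) ∩ Metric.closedBall x r with hD
  have hBD : Bset n σ ∩ Metric.closedBall x r = ⋂ M, D M := by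
    rw [hD]
    unfold Bset
    rw [Set.iInter_inter]
  rw [hBD]
  have hmeasD : ∀ M, NullMeasurableSet (D M) volume := by
    intro M
    apply MeasurableSet.nullMeasurableSet
    exact (MeasurableSet.iUnion fun N => MeasurableSet.iUnion fun _ =>
      measurableSet_eset n σ (N+1)).inter measurableSet_closedBall
  have hdir : Directed (· ⊇ ·) D := by
    intro M M'
    refine ⟨max M M', ?_, ?_⟩ <;>
    · apply Set.inter_subset_inter_left
      apply Set.iUnion_subset
      intro N
      apply Set.iUnion_subset
      intro hMN
      exact Set.subset_iUnion₂ (s := fun N _ => Eset n σ (N+1)) N (by omega)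
  have hfin : ∃ M, volume (D M) ≠ ⊤ := by
    refine ⟨0, ?_⟩
    apply ne_top_of_le_ne_top _ (measure_mono Set.inter_subset_right)
    rw [hvolball]
    exact ENNReal.ofReal_ne_top
  rw [Directed.measure_iInter hmeasD hdir hfin]
  apply le_iInf
  intro M
  have hsub : Eset n σ (max M N₂ + 1) ∩ Metric.closedBall x r ⊆ D M := by
    apply Set.inter_subset_inter_left
    exact Set.subset_iUnion₂ (s := fun N _ => Eset n σ (N+1)) (max M N₂) (by omega)
  exact le_trans (hN₂ _ (by omega)) (measure_mono hsub)

lemma full_of_density {n : ℕ} (B : Set (Fin n → ℝ)) (hm : MeasurableSet B)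
    (c : ℝ) (hc : 0 < c)
    (h : ∀ (x : Fin n → ℝ) (r : ℝ), 0 < r →
      ENNReal.ofReal c * volume (Metric.closedBall x r) ≤ volume (B ∩ Metric.closedBall x r)) :
    volume Bᶜ = 0 := by
  by_contra hA
  have hres : (volume.restrict Bᶜ) ≠ 0 := by
    intro h0
    apply hA
    have h1 := congrArg (fun μ : Measure (Fin n → ℝ) => μ Set.univ) h0
    simpa [Measure.restrict_apply_univ] using h1
  have hae := Besicovitch.ae_tendsto_measure_inter_div (volume : Measure (Fin n → ℝ)) Bᶜ
  have hneb : (MeasureTheory.ae (volume.restrict Bᶜ)).NeBot := ae_neBot.mpr hres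
  obtain ⟨x, hx⟩ := hae.exists
  have hb : ∀ r : ℝ, 0 < r →
      volume (Bᶜ ∩ Metric.closedBall x r) / volume (Metric.closedBall x r)
        ≤ 1 - ENNReal.ofReal c := by
    intro r hr
    set V := volume (Metric.closedBall x r) with hV
    have hV0 : V ≠ 0 := by
      rw [hV, Real.volume_pi_closedBall x hr.le]
      simp only [ne_eq, ENNReal.ofReal_eq_zero, not_le]
      positivity
    have hVt : V ≠ ⊤ := by
      rw [hV, Real.volume_pi_closedBall x hr.le]
      exact ENNReal.ofReal_ne_top
    rw [ENNReal.div_le_iff hV0 hVt]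
    have hsplit : volume (Metric.closedBall x r ∩ B) + volume (Metric.closedBall x r \ B) = V :=
      measure_inter_add_diff _ hm
    have hXeq : Metric.closedBall x r \ B = Bᶜ ∩ Metric.closedBall x r := by
      rw [Set.diff_eq, Set.inter_comm]
    rw [hXeq] at hsplit
    have hY : ENNReal.ofReal c * V ≤ volume (Metric.closedBall x r ∩ B) := by
      rw [Set.inter_comm]
      exact h x r hr
    have hsm : ((1:ℝ≥0∞) - ENNReal.ofReal c) * V = V - ENNReal.ofReal c * V := by
      rw [ENNReal.sub_mul (fun _ _ => hVt), one_mul]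
    rw [hsm]
    apply ENNReal.le_sub_of_add_le_right
    · exact ENNReal.mul_ne_top ENNReal.ofReal_ne_top hVt
    · calc volume (Bᶜ ∩ Metric.closedBall x r) + ENNReal.ofReal c * V
          ≤ volume (Bᶜ ∩ Metric.closedBall x r) + volume (Metric.closedBall x r ∩ B) :=
            add_le_add_right hY _
        _ = V := by rw [add_comm]; exact hsplit
  have hlim : (1:ℝ≥0∞) ≤ 1 - ENNReal.ofReal c := by
    apply le_of_tendsto hx
    apply eventually_nhdsWithin_of_forall
    intro r hr
    exact hb r hr
  have hlt : (1:ℝ≥0∞) - ENNReal.ofReal c < 1 := by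
    apply ENNReal.sub_lt_self ENNReal.one_ne_top one_ne_zero
    simpa using hc
  exact absurd hlim (not_le.mpr hlt)

lemma bset_ae (n : ℕ) (σ : Equiv.Perm (Fin n)) :
    ∀ᵐ α ∂(volume : Measure (Fin n → ℝ)), α ∈ Bset n σ := by
  have hc : (0:ℝ) < ∏ k : Fin n, dd (k:ℕ) :=
    Finset.prod_pos fun k _ => dd_pos _
  have h0 := full_of_density (Bset n σ) (measurableSet_bset n σ) _ hc
    (fun x r hr => bset_lower n σ x r hr)
  rw [ae_iff]
  exact h0

theorem stmt18 (n : ℕ) :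
    ∀ᵐ α ∂(MeasureTheory.volume : MeasureTheory.Measure (Fin n → ℝ)),
      kIndex α = Nat.factorial n := by
  have hall : ∀ᵐ α ∂(volume : Measure (Fin n → ℝ)),
      ∀ σ : Equiv.Perm (Fin n), α ∈ Bset n σ :=
    (MeasureTheory.ae_all_iff).mpr fun σ => bset_ae n σ
  filter_upwards [hall] with α hα
  unfold kIndex
  have hset : {σ : Equiv.Perm (Fin n) | ∀ T : ℝ, ∃ t : ℝ, T < t ∧ ∀ i j : Fin n, i < j →
      psi (α (σ j)) t < psi (α (σ i)) t} = Set.univ := by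
    ext σ
    simp only [Set.mem_setOf_eq, Set.mem_univ, iff_true]
    intro T
    have hmem := hα σ
    unfold Bset at hmem
    rw [Set.mem_iInter] at hmem
    have hmem2 := hmem ⌈T⌉₊
    rw [Set.mem_iUnion] at hmem2
    obtain ⟨N, hN⟩ := hmem2
    rw [Set.mem_iUnion] at hN
    obtain ⟨hMN, hE⟩ := hN
    refine ⟨((N+1 : ℕ) : ℝ), ?_, ?_⟩
    · have h1 : T ≤ (⌈T⌉₊ : ℝ) := Nat.le_ceil T
      have h2 : ((⌈T⌉₊ : ℕ) : ℝ) ≤ (N : ℝ) := by exact_mod_cast hMN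
      push_cast
      linarith
    · exact fun i j hij => eset_ord (by omega) hE i j hij
  rw [hset, Set.ncard_univ]
  rw [Nat.card_eq_fintype_card, Fintype.card_perm, Fintype.card_fin]
end
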